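/- arXiv:2505.23428 — 5 statements merged into one kernel-verified Lean document; each statement's English description precedes it below -/
import Mathlib

section
/- For every positive integer n, the number of representations of n by the quadratic form x^2 + xy + y^2 (counting ordered pairs (x,y) of integers) equals 6 times the sum over divisors d of n of χ₃(d), where χ₃ is the nontrivial Dirichlet character modulo 3. -/
/-- The nontrivial Dirichlet character modulo 3. -/
def chi3 (d : ℕ) : ℤ := if d % 3 = 1 then 1 else if d % 3 = 2 then -1 else 0


/-- Eisenstein-like integers ℤ[θ] with θ² = θ - 1 (θ a primitive 6th root of unity).
Norm is a² + ab + b². -/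
@[ext]
structure Eis where
  re : ℤ
  im : ℤ
  deriving DecidableEq

namespace Eis

instance : Zero Eis := ⟨⟨0, 0⟩⟩
instance : One Eis := ⟨⟨1, 0⟩⟩
instance : Add Eis := ⟨fun a b => ⟨a.re + b.re, a.im + b.im⟩⟩
instance : Neg Eis := ⟨fun a => ⟨-a.re, -a.im⟩⟩
instance : Mul Eis := ⟨fun a b =>
  ⟨a.re * b.re - a.im * b.im, a.re * b.im + a.im * b.re + a.im * b.im⟩⟩

@[simp] lemma zero_re : (0 : Eis).re = 0 := rfl
@[simp] lemma zero_im : (0 : Eis).im = 0 := rfl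
@[simp] lemma one_re : (1 : Eis).re = 1 := rfl
@[simp] lemma one_im : (1 : Eis).im = 0 := rfl
@[simp] lemma add_re (a b : Eis) : (a + b).re = a.re + b.re := rfl
@[simp] lemma add_im (a b : Eis) : (a + b).im = a.im + b.im := rfl
@[simp] lemma neg_re (a : Eis) : (-a).re = -a.re := rfl
@[simp] lemma neg_im (a : Eis) : (-a).im = -a.im := rfl
@[simp] lemma mul_re (a b : Eis) : (a * b).re = a.re * b.re - a.im * b.im := rfl
@[simp] lemma mul_im (a b : Eis) : (a * b).im = a.re * b.im + a.im * b.re + a.im * b.im := rfl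

instance addCommGroup : AddCommGroup Eis := by
  refine
  { add := (· + ·)
    zero := (0 : Eis)
    sub := fun a b => a + -b
    neg := Neg.neg
    nsmul := @nsmulRec Eis ⟨0⟩ ⟨(· + ·)⟩
    zsmul := @zsmulRec Eis ⟨0⟩ ⟨(· + ·)⟩ ⟨Neg.neg⟩ (@nsmulRec Eis ⟨0⟩ ⟨(· + ·)⟩)
    add_assoc := ?_
    zero_add := ?_
    add_zero := ?_
    neg_add_cancel := ?_
    add_comm := ?_ } <;>
  intros <;> ext <;> simp [add_comm, add_left_comm]

instance addGroupWithOne : AddGroupWithOne Eis :=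
  { Eis.addCommGroup with
    natCast := fun n => ⟨(n : ℤ), 0⟩
    intCast := fun n => ⟨n, 0⟩
    one := 1 }

instance instCommRing : CommRing Eis := by
  refine
  { Eis.addGroupWithOne with
    mul := (· * ·)
    npow := @npowRec Eis ⟨1⟩ ⟨(· * ·)⟩,
    add_comm := ?_
    left_distrib := ?_
    right_distrib := ?_
    zero_mul := ?_
    mul_zero := ?_
    mul_assoc := ?_
    one_mul := ?_
    mul_one := ?_
    mul_comm := ?_ } <;>
  intros <;> ext <;> simp <;> ring

@[simp] lemma natCast_re (n : ℕ) : (n : Eis).re = n := rfl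
@[simp] lemma natCast_im (n : ℕ) : (n : Eis).im = 0 := rfl
@[simp] lemma intCast_re (n : ℤ) : (n : Eis).re = n := rfl
@[simp] lemma intCast_im (n : ℤ) : (n : Eis).im = 0 := rfl
@[simp] lemma sub_re (a b : Eis) : (a - b).re = a.re - b.re := rfl
@[simp] lemma sub_im (a b : Eis) : (a - b).im = a.im - b.im := rfl

instance : Nontrivial Eis := ⟨⟨0, 1, by intro h; simpa using congrArg Eis.re h⟩⟩

/-- Conjugation. -/
def conj (z : Eis) : Eis := ⟨z.re + z.im, -z.im⟩

@[simp] lemma conj_re (z : Eis) : (conj z).re = z.re + z.im := rfl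
@[simp] lemma conj_im (z : Eis) : (conj z).im = -z.im := rfl

@[simp] lemma conj_conj (z : Eis) : conj (conj z) = z := by ext <;> simp

lemma conj_mul (a b : Eis) : conj (a * b) = conj a * conj b := by ext <;> simp <;> ring

@[simp] lemma conj_natCast (n : ℕ) : conj (n : Eis) = n := by ext <;> simp
@[simp] lemma conj_intCast (n : ℤ) : conj (n : Eis) = n := by ext <;> simp

lemma conj_dvd_conj {a b : Eis} (h : a ∣ b) : conj a ∣ conj b := by
  obtain ⟨c, rfl⟩ := h; exact ⟨conj c, conj_mul _ _⟩

lemma dvd_of_conj_dvd_conj {a b : Eis} (h : conj a ∣ conj b) : a ∣ b := by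
  simpa using conj_dvd_conj h

/-- The norm a² + ab + b². -/
def Nm (z : Eis) : ℤ := z.re * z.re + z.re * z.im + z.im * z.im

lemma Nm_mul (a b : Eis) : Nm (a * b) = Nm a * Nm b := by simp [Nm]; ring

@[simp] lemma Nm_conj (z : Eis) : Nm (conj z) = Nm z := by simp [Nm]; ring

lemma Nm_nonneg (z : Eis) : 0 ≤ Nm z := by
  have h := sq_nonneg (2 * z.re + z.im); have h2 := sq_nonneg z.im
  simp [Nm]; nlinarith

lemma Nm_eq_zero_iff {z : Eis} : Nm z = 0 ↔ z = 0 := by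
  constructor
  · intro h
    have h4 : (2 * z.re + z.im) ^ 2 + 3 * z.im ^ 2 = 4 * Nm z := by simp [Nm]; ring
    rw [h, mul_zero] at h4
    have him : z.im = 0 := by
      have h1 : z.im ^ 2 = 0 := by nlinarith [sq_nonneg (2 * z.re + z.im)]
      exact sq_eq_zero_iff.mp h1
    have hre : z.re = 0 := by
      have h1 : z.re ^ 2 = 0 := by nlinarith [sq_nonneg z.im]
      exact sq_eq_zero_iff.mp h1
    ext <;> simp [him, hre]
  · rintro rfl; simp [Nm]

lemma Nm_ne_zero {z : Eis} (h : z ≠ 0) : Nm z ≠ 0 := fun hh => h (Nm_eq_zero_iff.mp hh)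

lemma mul_conj (z : Eis) : z * conj z = (Nm z : Eis) := by ext <;> simp [Nm] <;> ring

@[simp] lemma Nm_natCast (n : ℕ) : Nm (n : Eis) = (n : ℤ) * n := by simp [Nm]

lemma Nm_dvd_Nm {a b : Eis} (h : a ∣ b) : Nm a ∣ Nm b := by
  obtain ⟨c, rfl⟩ := h; exact ⟨Nm c, Nm_mul a c⟩

lemma isUnit_of_nm_eq_one {u : Eis} (h : Nm u = 1) : IsUnit u :=
  IsUnit.of_mul_eq_one (a := u) (conj u) (by rw [mul_conj, h]; norm_num)

lemma nm_eq_one_of_isUnit {u : Eis} (h : IsUnit u) : Nm u = 1 := by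
  obtain ⟨v, hv⟩ := h.exists_right_inv
  have h2 : Nm u * Nm v = 1 := by rw [← Nm_mul, hv]; simp [Nm]
  exact Int.eq_one_of_dvd_one (Nm_nonneg u) ⟨Nm v, h2.symm⟩

end Eis
namespace Eis

/-- Round-to-nearest integer division: nearest integer to `x / c`. -/
def rnd (x c : ℤ) : ℤ := (2 * x + c) / (2 * c)

lemma rnd_spec (x c : ℤ) (hc : 0 < c) : 2 * |x - c * rnd x c| ≤ c := by
  have h2c : 0 < 2 * c := by omega
  have h1 := Int.emod_nonneg (2 * x + c) (by omega : (2 * c) ≠ 0)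
  have h2 := Int.emod_lt_of_pos (2 * x + c) h2c
  rw [Int.emod_def] at h1 h2
  rw [rnd]
  rcases abs_cases (x - c * ((2 * x + c) / (2 * c))) with ⟨he, _⟩ | ⟨he, _⟩ <;>
    rw [he] <;> linarith

instance : Div Eis :=
  ⟨fun x y => ⟨rnd (x * conj y).re (Nm y), rnd (x * conj y).im (Nm y)⟩⟩

lemma div_def (x y : Eis) :
    x / y = ⟨rnd (x * conj y).re (Nm y), rnd (x * conj y).im (Nm y)⟩ := rfl

instance : Mod Eis := ⟨fun x y => x - y * (x / y)⟩

lemma mod_def (x y : Eis) : x % y = x - y * (x / y) := rfl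

lemma nm_mk_lt {u v c : ℤ} (hc : 0 < c) (h1 : 2 * |u| ≤ c) (h2 : 2 * |v| ≤ c) :
    Nm ⟨u, v⟩ < c * c := by
  obtain ⟨hu1, hu2⟩ := abs_le.mp (by linarith : |u| ≤ c)
  obtain ⟨hv1, hv2⟩ := abs_le.mp (by linarith : |v| ≤ c)
  have hu := abs_le.mp (show |2 * u| ≤ c by rw [abs_mul]; simpa using h1)
  have hv := abs_le.mp (show |2 * v| ≤ c by rw [abs_mul]; simpa using h2)
  have a1 : 0 ≤ (c - 2*u) * (c + 2*u) := mul_nonneg (by linarith [hu.1, hu.2]) (by linarith [hu.1])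
  have a2 : 0 ≤ (c - 2*v) * (c + 2*v) := mul_nonneg (by linarith [hv.2]) (by linarith [hv.1])
  have a3 : 0 ≤ (c + 2*u) * (c - 2*v) := mul_nonneg (by linarith [hu.1]) (by linarith [hv.2])
  have a4 : 0 ≤ (c - 2*u) * (c + 2*v) := mul_nonneg (by linarith [hu.2]) (by linarith [hv.1])
  show u * u + u * v + v * v < c * c
  nlinarith [a1, a2, a3, a4, hc]

lemma nm_mod_lt (x : Eis) {y : Eis} (hy : y ≠ 0) : Nm (x % y) < Nm y := by
  have hc : 0 < Nm y := lt_of_le_of_ne (Nm_nonneg y) (Ne.symm (Nm_ne_zero hy))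
  set c := Nm y with hcdef
  set q := x / y with hq
  set w := x * conj y with hw
  have key : (x % y) * conj y = ⟨w.re - c * q.re, w.im - c * q.im⟩ := by
    rw [mod_def]
    have h9 : (x - y * q) * conj y = x * conj y - (y * conj y) * q := by ring
    rw [h9, mul_conj, ← hcdef, ← hw]
    ext <;> simp <;> ring
  have h1 : 2 * |w.re - c * q.re| ≤ c := by
    have h := rnd_spec w.re c hc
    have hqre : q.re = rnd w.re c := by rw [hq, div_def]
    rw [hqre]; exact h
  have h2 : 2 * |w.im - c * q.im| ≤ c := by
    have h := rnd_spec w.im c hc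
    have hqim : q.im = rnd w.im c := by rw [hq, div_def]
    rw [hqim]; exact h
  have hNe : Nm ((x % y) * conj y) < c * c := by
    rw [key]; exact nm_mk_lt hc h1 h2
  have hNm : Nm (x % y) * c = Nm ((x % y) * conj y) := by rw [Nm_mul, Nm_conj]
  nlinarith [Nm_nonneg (x % y)]

lemma natAbs_nm_mod_lt (x : Eis) {y : Eis} (hy : y ≠ 0) :
    (Nm (x % y)).natAbs < (Nm y).natAbs := by
  have := nm_mod_lt x hy
  have h1 := Nm_nonneg (x % y); have h2 := Nm_nonneg y
  omega

lemma nm_le_nm_mul_left (x : Eis) {y : Eis} (hy : y ≠ 0) :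
    (Nm x).natAbs ≤ (Nm (x * y)).natAbs := by
  rw [Nm_mul, Int.natAbs_mul]
  have h2 : 1 ≤ (Nm y).natAbs := by
    have := Nm_nonneg y; have := Nm_ne_zero hy; omega
  exact Nat.le_mul_of_pos_right _ (by omega)

instance : EuclideanDomain Eis :=
  { Eis.instCommRing, (inferInstance : Nontrivial Eis) with
    quotient := (· / ·)
    remainder := (· % ·)
    quotient_zero := fun x => by
      ext <;> simp [div_def, rnd, conj, Nm]
    quotient_mul_add_remainder_eq := fun a b => by
      change b * (a / b) + (a - b * (a / b)) = a; ring
    r := fun a b => (Nm a).natAbs < (Nm b).natAbs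
    r_wellFounded := (measure (Int.natAbs ∘ Nm)).wf
    remainder_lt := fun a b hb => natAbs_nm_mod_lt a hb
    mul_left_not_lt := fun a b hb0 => not_lt_of_ge <| nm_le_nm_mul_left a hb0 }

end Eis
namespace Eis

lemma nm_eq_one_iff_isUnit {u : Eis} : Nm u = 1 ↔ IsUnit u :=
  ⟨isUnit_of_nm_eq_one, nm_eq_one_of_isUnit⟩

lemma prime_of_nm_prime {z : Eis} (hz : Prime (Nm z)) : Prime z := by
  have hirr : Irreducible z := by
    constructor
    · intro hu; rw [nm_eq_one_of_isUnit hu] at hz; exact hz.not_unit isUnit_one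
    · intro a b hab
      have hm : Nm a * Nm b = Nm z := by rw [← Nm_mul, ← hab]
      rcases hz.irreducible.isUnit_or_isUnit hm.symm with h | h
      · left
        apply isUnit_of_nm_eq_one
        rcases Int.isUnit_iff.mp h with h1 | h1
        · exact h1
        · have := Nm_nonneg a; omega
      · right
        apply isUnit_of_nm_eq_one
        rcases Int.isUnit_iff.mp h with h1 | h1
        · exact h1
        · have := Nm_nonneg b; omega
  exact (_root_.irreducible_iff_prime).mp hirr

lemma intCast_dvd {n : ℤ} {z : Eis} : (n : Eis) ∣ z ↔ n ∣ z.re ∧ n ∣ z.im := by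
  constructor
  · rintro ⟨w, rfl⟩
    exact ⟨⟨w.re, by simp⟩, ⟨w.im, by simp⟩⟩
  · rintro ⟨⟨a, ha⟩, ⟨b, hb⟩⟩
    exact ⟨⟨a, b⟩, by ext <;> simp [ha, hb]⟩

lemma intCast_dvd_intCast_eis {a b : ℤ} (h : a ∣ b) : (a : Eis) ∣ (b : Eis) :=
  map_dvd (Int.castRingHom Eis) h

/-- If `n` divides the norm of `z` then `(n : Eis)` divides `z * conj z`. -/
lemma cast_dvd_mul_conj {n : ℤ} {z : Eis} (h : n ∣ Nm z) : (n : Eis) ∣ z * conj z := by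
  rw [mul_conj]; exact intCast_dvd_intCast_eis h

/-- The special element of norm 3. -/
def lam : Eis := ⟨1, 1⟩

lemma Nm_lam : Nm lam = 3 := rfl

lemma prime_lam : Prime lam := prime_of_nm_prime (by rw [Nm_lam]; exact Int.prime_three)

lemma conj_lam_eq : conj lam = lam * ⟨1, -1⟩ := by ext <;> simp [lam, conj] <;> ring

lemma lam_dvd_conj_lam : lam ∣ conj lam := ⟨⟨1, -1⟩, conj_lam_eq⟩

lemma lam_dvd_of_three_dvd {z : Eis} (h : (3 : ℤ) ∣ Nm z) : lam ∣ z := by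
  have h1 : lam ∣ z * conj z := by
    refine dvd_trans ?_ (cast_dvd_mul_conj h)
    refine ⟨conj lam, ?_⟩
    have := mul_conj lam
    rw [Nm_lam] at this
    exact this.symm
  rcases prime_lam.dvd_or_dvd h1 with h2 | h2
  · exact h2
  · have h3 : conj lam ∣ conj (conj z) := conj_dvd_conj h2
    rw [conj_conj] at h3
    exact dvd_trans lam_dvd_conj_lam h3

lemma nm_ne_cast_of_two_mod3 {p : ℕ} (h2 : p % 3 = 2) (z : Eis) : Nm z ≠ (p : ℤ) := by
  intro h
  have key : ∀ a b : ZMod 3, a * a + a * b + b * b ≠ 2 := by decide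
  have h3 : ((Nm z : ℤ) : ZMod 3) = (z.re : ZMod 3) * z.re + (z.re : ZMod 3) * z.im +
      (z.im : ZMod 3) * z.im := by
    push_cast [Nm]; ring
  have h4 : ((p : ℤ) : ZMod 3) = 2 := by
    have : p = 3 * (p / 3) + 2 := by omega
    rw [this]; push_cast
    rw [show ((3 : ZMod 3)) = 0 by decide]; ring
  rw [h, h4] at h3
  exact key _ _ h3.symm

lemma prime_cast_of_two_mod3 {p : ℕ} (hp : p.Prime) (h2 : p % 3 = 2) :
    Prime (p : Eis) := by
  have hnm : Nm (p : Eis) = (p : ℤ) * (p : ℤ) := by simp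
  have hirr : Irreducible (p : Eis) := by
    constructor
    · intro hu
      have := nm_eq_one_of_isUnit hu
      rw [hnm] at this
      have hp2 := hp.two_le
      nlinarith [this]
    · intro a b hab
      have hm : Nm a * Nm b = (p : ℤ) * (p : ℤ) := by rw [← Nm_mul, ← hab, hnm]
      have hna := Nm_nonneg a; have hnb := Nm_nonneg b
      have hnat : (Nm a).natAbs * (Nm b).natAbs = p ^ 2 := by
        have := congrArg Int.natAbs hm
        rw [Int.natAbs_mul] at this
        simpa [sq, Int.natAbs_mul] using this
      have hdvd : (Nm a).natAbs ∣ p ^ 2 := ⟨(Nm b).natAbs, hnat.symm⟩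
      obtain ⟨m, hm2, hma⟩ := (Nat.dvd_prime_pow hp).mp hdvd
      interval_cases m
      · left
        apply isUnit_of_nm_eq_one
        simp at hma; omega
      · exfalso
        apply nm_ne_cast_of_two_mod3 h2 a
        simp at hma; omega
      · right
        apply isUnit_of_nm_eq_one
        have hp0 : 0 < p ^ 2 := by have := hp.pos; positivity
        have h5 : p ^ 2 * (Nm b).natAbs = p ^ 2 * 1 := by
          rw [mul_one]
          conv_lhs => rw [← hma]
          exact hnat
        have hb1 := Nat.eq_of_mul_eq_mul_left hp0 h5
        omega
  exact (_root_.irreducible_iff_prime).mp hirr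

lemma cast_dvd_of_dvd_nm_two_mod3 {p : ℕ} (hp : p.Prime) (h2 : p % 3 = 2) {z : Eis}
    (h : (p : ℤ) ∣ Nm z) : (p : Eis) ∣ z := by
  have h1 : (p : Eis) ∣ z * conj z := by
    have := cast_dvd_mul_conj h
    simpa using this
  rcases (prime_cast_of_two_mod3 hp h2).dvd_or_dvd h1 with h3 | h3
  · exact h3
  · have h4 : conj (p : Eis) ∣ conj (conj z) := conj_dvd_conj h3
    rw [conj_conj] at h4
    simpa using h4

end Eis
namespace Eis

@[simp] lemma ofNat_re (n : ℕ) [n.AtLeastTwo] :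
    (OfNat.ofNat n : Eis).re = OfNat.ofNat n := rfl
@[simp] lemma ofNat_im (n : ℕ) [n.AtLeastTwo] :
    (OfNat.ofNat n : Eis).im = 0 := rfl

lemma exists_sqrt_neg_three {p : ℕ} (hp : p.Prime) (h1 : p % 3 = 1) :
    ∃ c : ℤ, (p : ℤ) ∣ c ^ 2 + 3 := by
  haveI : Fact p.Prime := ⟨hp⟩
  haveI : Fact (Nat.Prime 3) := ⟨by norm_num⟩
  have h3 : 3 ∣ Nat.card (ZMod p)ˣ := by
    rw [Nat.card_eq_fintype_card, ZMod.card_units_eq_totient, Nat.totient_prime hp]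
    omega
  obtain ⟨u, hu⟩ := exists_prime_orderOf_dvd_card' 3 h3
  set x : ZMod p := (u : ZMod p) with hx
  have hx3 : x ^ 3 = 1 := by
    rw [hx, ← Units.val_pow_eq_pow_val, ← hu, pow_orderOf_eq_one, Units.val_one]
  have hx1 : x ≠ 1 := by
    intro h
    have : u = 1 := Units.ext h
    rw [this, orderOf_one] at hu
    omega
  have hfac : (x - 1) * (x * x + x + 1) = 0 := by
    have : (x - 1) * (x * x + x + 1) = x ^ 3 - 1 := by ring
    rw [this, hx3, sub_self]
  have hsum : x * x + x + 1 = 0 := by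
    rcases mul_eq_zero.mp hfac with h | h
    · exact absurd (sub_eq_zero.mp h) hx1
    · exact h
  have hsq : (2 * x + 1) ^ 2 = -3 := by
    have : (2 * x + 1) ^ 2 = 4 * (x * x + x + 1) - 3 := by ring
    rw [this, hsum]; ring
  refine ⟨((2 * x + 1 : ZMod p).val : ℤ), ?_⟩
  rw [← ZMod.intCast_zmod_eq_zero_iff_dvd]
  push_cast
  rw [ZMod.natCast_val, ZMod.cast_id]
  rw [hsq]; ring

/-- δ = 2θ - 1, a square root of -3. -/
def delta : Eis := ⟨-1, 2⟩

@[simp] lemma delta_re : delta.re = -1 := rfl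
@[simp] lemma delta_im : delta.im = 2 := rfl

lemma conj_delta : conj delta = -delta := by ext <;> simp [delta, conj]

lemma Nm_two_delta : Nm (delta + delta) = 12 := rfl

lemma conj_add (a b : Eis) : conj (a + b) = conj a + conj b := by ext <;> simp <;> ring

lemma conj_sub (a b : Eis) : conj (a - b) = conj a - conj b := by ext <;> simp <;> ring

lemma factor_key (c : ℤ) : ((c : Eis) + delta) * ((c : Eis) - delta) = ((c ^ 2 + 3 : ℤ) : Eis) := by
  ext <;>
    simp only [mul_re, mul_im, add_re, add_im, sub_re, sub_im, intCast_re, intCast_im,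
      delta_re, delta_im] <;> ring

lemma not_dvd_two {p : ℕ} (hp : p.Prime) (h1 : p % 3 = 1) : ¬ ((p : ℤ) ∣ 2) := by
  intro h
  have h2 : p ∣ 2 := by exact_mod_cast h
  have h3 : p = 2 := (Nat.prime_dvd_prime_iff_eq hp Nat.prime_two).mp h2
  omega

lemma exists_split_prime {p : ℕ} (hp : p.Prime) (h1 : p % 3 = 1) :
    ∃ π : Eis, Nm π = (p : ℤ) ∧ Prime π ∧ ¬ (π ∣ conj π) := by
  obtain ⟨c, hc⟩ := exists_sqrt_neg_three hp h1
  -- (p : Eis) is not prime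
  have hnotprime : ¬ Prime (p : Eis) := by
    intro hpr
    have hdvd : (p : Eis) ∣ ((c : Eis) + delta) * ((c : Eis) - delta) := by
      rw [factor_key]
      exact_mod_cast intCast_dvd_intCast_eis hc
    rcases hpr.dvd_or_dvd hdvd with h | h
    · have := (intCast_dvd (n := (p : ℤ))).mp (by exact_mod_cast h)
      have h2 : (p : ℤ) ∣ 2 := by simpa [delta] using this.2
      exact not_dvd_two hp h1 h2
    · have := (intCast_dvd (n := (p : ℤ))).mp (by exact_mod_cast h)
      have h2 : (p : ℤ) ∣ -2 := by simpa [delta] using this.2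
      exact not_dvd_two hp h1 ((dvd_neg).mp h2)
  -- (p : Eis) is not a unit
  have hnotunit : ¬ IsUnit (p : Eis) := by
    intro h
    have := nm_eq_one_of_isUnit h
    rw [show ((p : ℕ) : Eis) = ((p : ℤ) : Eis) by push_cast; rfl] at this
    simp [Nm] at this
    nlinarith [hp.two_le, this]
  -- hence not irreducible, so it factors
  have hnotirr : ¬ Irreducible (p : Eis) := fun h =>
    hnotprime ((_root_.irreducible_iff_prime).mp h)
  rw [irreducible_iff] at hnotirr
  push_neg at hnotirr
  obtain ⟨a, b, hab, hua, hub⟩ := hnotirr hnotunit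
  have hm : Nm a * Nm b = (p : ℤ) * (p : ℤ) := by
    rw [← Nm_mul, ← hab]; simp
  have hna := Nm_nonneg a; have hnb := Nm_nonneg b
  have hnat : (Nm a).natAbs * (Nm b).natAbs = p ^ 2 := by
    have := congrArg Int.natAbs hm
    rw [Int.natAbs_mul] at this
    simpa [sq, Int.natAbs_mul] using this
  have hdvd : (Nm a).natAbs ∣ p ^ 2 := ⟨(Nm b).natAbs, hnat.symm⟩
  obtain ⟨m, hm2, hma⟩ := (Nat.dvd_prime_pow hp).mp hdvd
  have hNa : Nm a = (p : ℤ) := by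
    interval_cases m
    · exfalso; apply hua; apply isUnit_of_nm_eq_one; simp at hma; omega
    · simp [pow_one] at hma; omega
    · exfalso
      apply hub; apply isUnit_of_nm_eq_one
      have hp0 : 0 < p ^ 2 := by have := hp.pos; positivity
      have h5 : p ^ 2 * (Nm b).natAbs = p ^ 2 * 1 := by
        rw [mul_one]
        conv_lhs => rw [← hma]
        exact hnat
      have hb1 := Nat.eq_of_mul_eq_mul_left hp0 h5
      omega
  have hprime : Prime a := prime_of_nm_prime (by rw [hNa]; exact Nat.prime_iff_prime_int.mp hp)
  refine ⟨a, hNa, hprime, ?_⟩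
  intro hd
  have hap : a ∣ (p : Eis) := by
    refine ⟨conj a, ?_⟩
    rw [show ((p : ℕ) : Eis) = ((p : ℤ) : Eis) by push_cast; rfl, ← hNa, ← mul_conj]
  have hfac : a ∣ ((c : Eis) + delta) * ((c : Eis) - delta) := by
    refine hap.trans ?_
    rw [factor_key]
    exact_mod_cast intCast_dvd_intCast_eis hc
  have htwo : a ∣ delta + delta := by
    rcases hprime.dvd_or_dvd hfac with h | h
    · have h2 : conj a ∣ (c : Eis) - delta := by
        have := conj_dvd_conj h
        rwa [conj_add, conj_intCast, conj_delta, ← sub_eq_add_neg] at this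
      have h3 : a ∣ (c : Eis) - delta := hd.trans h2
      have := dvd_sub h h3
      simpa using this
    · have h2 : conj a ∣ (c : Eis) + delta := by
        have := conj_dvd_conj h
        rwa [conj_sub, conj_intCast, conj_delta, sub_neg_eq_add] at this
      have h3 : a ∣ (c : Eis) + delta := hd.trans h2
      have := dvd_sub h3 h
      simpa using this
  have h12 : (p : ℤ) ∣ 12 := by
    have := Nm_dvd_Nm htwo
    rwa [hNa, Nm_two_delta] at this
  have h12' : p ∣ 12 := by exact_mod_cast h12
  have hle : p ≤ 12 := Nat.le_of_dvd (by norm_num) h12'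
  interval_cases p <;> first
    | omega
    | exact absurd hp (by norm_num)
    | exact absurd h12' (by norm_num)

end Eis
namespace Eis

lemma Nm_pow (z : Eis) (k : ℕ) : Nm (z ^ k) = Nm z ^ k := by
  induction k with
  | zero => simp [Nm]
  | succ k ih => rw [pow_succ, Nm_mul, ih, pow_succ]

lemma card_nm_mul (q : Eis) (L t : ℤ) (hL : L ≠ 0) (hNq : Nm q = L)
    (hdvd : ∀ z : Eis, Nm z = L * t → q ∣ z) :
    Nat.card {z : Eis // Nm z = L * t} = Nat.card {w : Eis // Nm w = t} := by
  apply Nat.card_congr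
  refine (Equiv.ofBijective (fun w : {w : Eis // Nm w = t} =>
    (⟨q * w.1, by rw [Nm_mul, hNq, w.2]⟩ : {z : Eis // Nm z = L * t})) ?_).symm
  constructor
  · intro w w' h
    have hq0 : q ≠ 0 := by
      intro h0; rw [h0] at hNq; exact hL (by rw [← hNq]; simp [Nm])
    have h2 := congrArg Subtype.val h
    exact Subtype.ext (mul_left_cancel₀ hq0 h2)
  · rintro ⟨z, hz⟩
    obtain ⟨w, rfl⟩ := hdvd z hz
    have hw : Nm w = t := by
      have h3 : L * Nm w = L * t := by
        conv_lhs => rw [← hNq, ← Nm_mul]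
        exact hz
      exact mul_left_cancel₀ hL h3
    exact ⟨⟨w, hw⟩, rfl⟩

lemma card_three (t : ℤ) :
    Nat.card {z : Eis // Nm z = 3 * t} = Nat.card {w : Eis // Nm w = t} :=
  card_nm_mul lam 3 t (by norm_num) Nm_lam
    (fun z hz => lam_dvd_of_three_dvd ⟨t, hz⟩)

lemma card_inert {p : ℕ} (hp : p.Prime) (h2 : p % 3 = 2) (t : ℤ) :
    Nat.card {z : Eis // Nm z = ((p : ℤ) * p) * t} = Nat.card {w : Eis // Nm w = t} :=
  card_nm_mul (p : Eis) ((p : ℤ) * p) t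
    (by have := hp.pos; positivity)
    (by simp)
    (fun z hz => cast_dvd_of_dvd_nm_two_mod3 hp h2 ⟨p * t, by rw [hz]; ring⟩)

lemma card_inert_odd {p : ℕ} (hp : p.Prime) (h2 : p % 3 = 2) {n : ℕ}
    (hpn : p ∣ n) (hp2n : ¬ (p * p ∣ n)) :
    Nat.card {z : Eis // Nm z = (n : ℤ)} = 0 := by
  have : IsEmpty {z : Eis // Nm z = (n : ℤ)} := by
    constructor
    rintro ⟨z, hz⟩
    have hdz : (p : Eis) ∣ z := by
      apply cast_dvd_of_dvd_nm_two_mod3 hp h2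
      rw [hz]; exact_mod_cast Int.natCast_dvd_natCast.mpr hpn
    obtain ⟨w, rfl⟩ := hdz
    have hpp : ((p * p : ℕ) : ℤ) = Nm ((p : ℕ) : Eis) := by push_cast; simp
    have : ((p * p : ℕ) : ℤ) ∣ (n : ℤ) := by
      rw [← hz, Nm_mul, hpp]
      exact dvd_mul_right _ _
    exact hp2n (by exact_mod_cast this)
  exact Nat.card_of_isEmpty

/-- Representations of norm `p^a * m` for split prime `p`: existence part. -/
lemma split_rep {p : ℕ} {π : Eis} (hπ : Prime π) (hNπ : Nm π = (p : ℤ)) (hppos : 0 < p)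
    {m : ℕ} :
    ∀ (a : ℕ) (z : Eis), Nm z = (p : ℤ) ^ a * m →
      ∃ j w, j ≤ a ∧ Nm w = (m : ℤ) ∧ z = π ^ j * conj π ^ (a - j) * w := by
  intro a
  induction a with
  | zero => intro z hz; exact ⟨0, z, le_refl 0, by simpa using hz, by simp⟩
  | succ a ih =>
    intro z hz
    have hπp : π * conj π = ((p : ℤ) : Eis) := by rw [mul_conj, hNπ]
    have hdvd : π ∣ z * conj z := by
      refine dvd_trans ⟨conj π, hπp.symm⟩ (cast_dvd_mul_conj ?_)
      exact ⟨(p : ℤ) ^ a * m, by rw [hz]; ring⟩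
    have hp0 : ((p : ℤ)) ≠ 0 := by positivity
    rcases hπ.dvd_or_dvd hdvd with h | h
    · obtain ⟨z1, rfl⟩ := h
      have hz1 : Nm z1 = (p : ℤ) ^ a * m := by
        apply mul_left_cancel₀ hp0
        rw [← hNπ, ← Nm_mul, hz, hNπ]; ring
      obtain ⟨j, w, hj, hw, hzw⟩ := ih z1 hz1
      refine ⟨j + 1, w, by omega, hw, ?_⟩
      rw [show a + 1 - (j + 1) = a - j by omega, hzw, pow_succ]
      ring
    · have h3 : conj π ∣ z := by
        have := conj_dvd_conj h
        rwa [conj_conj] at this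
      obtain ⟨z1, rfl⟩ := h3
      have hz1 : Nm z1 = (p : ℤ) ^ a * m := by
        apply mul_left_cancel₀ hp0
        rw [show (p:ℤ) = Nm (conj π) by rw [Nm_conj, hNπ], ← Nm_mul,
          hz, Nm_conj, hNπ]; ring
      obtain ⟨j, w, hj, hw, hzw⟩ := ih z1 hz1
      refine ⟨j, w, by omega, hw, ?_⟩
      rw [show a + 1 - j = (a - j) + 1 by omega, hzw, pow_succ]
      ring

lemma split_inj_aux {p : ℕ} {π : Eis} (hπ : Prime π) (hNπ : Nm π = (p : ℤ))
    (hconj : ¬ π ∣ conj π) {m : ℕ} (hm : ¬ p ∣ m) {a : ℕ} :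
    ∀ (j k : ℕ) (w w' : Eis), j ≤ k → k ≤ a → Nm w = (m : ℤ) → Nm w' = (m : ℤ) →
      π ^ j * conj π ^ (a - j) * w = π ^ k * conj π ^ (a - k) * w' →
      j = k ∧ w = w' := by
  intro j k w w' hjk hka hw hw' heq
  have hπ0 : π ≠ 0 := hπ.ne_zero
  have hc0 : conj π ≠ 0 := by
    intro h
    apply hπ0
    have := congrArg conj h
    rw [conj_conj] at this
    exact this.trans (by ext <;> rfl)
  set c := conj π with hc
  have hsplit : π ^ j * (c ^ (a - k) * (c ^ (k - j) * w)) =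
      π ^ j * (c ^ (a - k) * (π ^ (k - j) * w')) := by
    have e1 : π ^ k = π ^ j * π ^ (k - j) := by rw [← pow_add]; congr 1; omega
    have e2 : c ^ (a - j) = c ^ (a - k) * c ^ (k - j) := by rw [← pow_add]; congr 1; omega
    calc π ^ j * (c ^ (a - k) * (c ^ (k - j) * w))
        = π ^ j * c ^ (a - j) * w := by rw [e2]; ring
      _ = π ^ k * c ^ (a - k) * w' := heq
      _ = π ^ j * (c ^ (a - k) * (π ^ (k - j) * w')) := by rw [e1]; ring
  have hkey : c ^ (k - j) * w = π ^ (k - j) * w' :=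
    mul_left_cancel₀ (pow_ne_zero _ hc0) (mul_left_cancel₀ (pow_ne_zero _ hπ0) hsplit)
  by_cases hd : k - j = 0
  · have hj : j = k := by omega
    refine ⟨hj, ?_⟩
    rw [hd] at hkey
    simpa using hkey
  · exfalso
    have hπdvd : π ∣ c ^ (k - j) * w := by
      rw [hkey]
      exact Dvd.dvd.mul_right (dvd_pow_self π hd) _
    rcases hπ.dvd_or_dvd hπdvd with h | h
    · exact hconj (hπ.dvd_of_dvd_pow h)
    · have : (p : ℤ) ∣ (m : ℤ) := by rw [← hNπ, ← hw]; exact Nm_dvd_Nm h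
      exact hm (by exact_mod_cast this)

lemma card_split {p : ℕ} (hp : p.Prime) (h1 : p % 3 = 1) (a m : ℕ) (hm : ¬ p ∣ m) :
    Nat.card {z : Eis // Nm z = (p : ℤ) ^ a * m}
      = (a + 1) * Nat.card {w : Eis // Nm w = (m : ℤ)} := by
  obtain ⟨π, hNπ, hπ, hconj⟩ := exists_split_prime hp h1
  have key : Nat.card {z : Eis // Nm z = (p : ℤ) ^ a * m}
      = Nat.card (Fin (a + 1) × {w : Eis // Nm w = (m : ℤ)}) := by
    apply Nat.card_congr
    refine (Equiv.ofBijective (fun x : Fin (a + 1) × {w : Eis // Nm w = (m : ℤ)} =>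
      (⟨π ^ (x.1 : ℕ) * conj π ^ (a - (x.1 : ℕ)) * x.2.1, by
        rw [Nm_mul, Nm_mul, Nm_pow, Nm_pow, Nm_conj, hNπ, x.2.2, ← pow_add,
          show (x.1 : ℕ) + (a - (x.1 : ℕ)) = a by omega]⟩ :
        {z : Eis // Nm z = (p : ℤ) ^ a * m})) ?_).symm
    constructor
    · rintro ⟨j, w⟩ ⟨k, w'⟩ h
      have h2 := congrArg Subtype.val h
      simp only at h2
      rcases le_total (j : ℕ) (k : ℕ) with hjk | hjk
      · obtain ⟨hj, hw⟩ := split_inj_aux hπ hNπ hconj hm (j : ℕ) (k : ℕ) w.1 w'.1 hjk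
          (by omega) w.2 w'.2 h2
        exact Prod.ext (Fin.ext hj) (Subtype.ext hw)
      · obtain ⟨hj, hw⟩ := split_inj_aux hπ hNπ hconj hm (k : ℕ) (j : ℕ) w'.1 w.1 hjk
          (by omega) w'.2 w.2 h2.symm
        exact Prod.ext (Fin.ext hj.symm) (Subtype.ext hw.symm)
    · rintro ⟨z, hz⟩
      obtain ⟨j, w, hj, hw, hzw⟩ := split_rep hπ hNπ hp.pos a z hz
      exact ⟨⟨⟨j, by omega⟩, ⟨w, hw⟩⟩, by apply Subtype.ext; exact hzw.symm⟩
  rw [key, Nat.card_prod, Nat.card_eq_fintype_card (α := Fin (a + 1)), Fintype.card_fin]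

end Eis

namespace Eis

/-! ### The base case: six units -/

def unitsSet : Finset Eis :=
  {⟨1, 0⟩, ⟨-1, 0⟩, ⟨0, 1⟩, ⟨0, -1⟩, ⟨1, -1⟩, ⟨-1, 1⟩}

lemma nm_eq_one_iff_mem {z : Eis} : Nm z = 1 ↔ z ∈ unitsSet := by
  constructor
  · intro h
    obtain ⟨u, v⟩ := z
    have hN : u * u + u * v + v * v = 1 := h
    have hu1 : u ≤ 1 := by nlinarith [sq_nonneg (u + 2 * v)]
    have hu2 : -1 ≤ u := by nlinarith [sq_nonneg (u + 2 * v)]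
    have hv1 : v ≤ 1 := by nlinarith [sq_nonneg (2 * u + v)]
    have hv2 : -1 ≤ v := by nlinarith [sq_nonneg (2 * u + v)]
    interval_cases u <;> interval_cases v <;> revert hN <;> decide
  · intro h
    revert h
    revert z
    decide

lemma card_one : Nat.card {z : Eis // Nm z = 1} = 6 := by
  rw [Nat.card_congr (Equiv.subtypeEquivRight fun z => nm_eq_one_iff_mem)]
  rw [Nat.card_eq_finsetCard]
  decide

/-! ### chi3 and divisor sums -/

lemma chi3_mul (a b : ℕ) : chi3 (a * b) = chi3 a * chi3 b := by
  have h := Nat.mul_mod a b 3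
  rcases (by omega : a % 3 = 0 ∨ a % 3 = 1 ∨ a % 3 = 2) with h1 | h1 | h1 <;>
    rcases (by omega : b % 3 = 0 ∨ b % 3 = 1 ∨ b % 3 = 2) with h2 | h2 | h2 <;>
    simp [chi3, h, h1, h2]

lemma chi3_pow (a k : ℕ) : chi3 (a ^ k) = chi3 a ^ k := by
  induction k with
  | zero => simp [chi3]
  | succ k ih => rw [pow_succ, chi3_mul, ih, pow_succ]

/-- The divisor sum of chi3. -/
def S (n : ℕ) : ℤ := ∑ d ∈ n.divisors, chi3 d

/-- chi3 as an arithmetic function. -/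
def chiA : ArithmeticFunction ℤ := ⟨fun n => chi3 n, by simp [chi3]⟩

lemma chiA_mult : chiA.IsMultiplicative :=
  ⟨by simp [chiA, chi3, ArithmeticFunction.coe_mk], fun {m n} _ => chi3_mul m n⟩

lemma S_eq (n : ℕ) : S n = ((↑(ArithmeticFunction.zeta) : ArithmeticFunction ℤ) * chiA) n := by
  rw [ArithmeticFunction.coe_zeta_mul_apply]
  rfl

lemma S_mul_coprime {m n : ℕ} (h : m.Coprime n) : S (m * n) = S m * S n := by
  rw [S_eq, S_eq, S_eq]
  exact ((ArithmeticFunction.isMultiplicative_zeta.natCast).mul chiA_mult).map_mul_of_coprime h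

lemma S_one : S 1 = 1 := by simp [S, chi3]

lemma S_prime_pow {p : ℕ} (hp : p.Prime) (k : ℕ) :
    S (p ^ k) = ∑ i ∈ Finset.range (k + 1), chi3 p ^ i := by
  rw [S, Nat.sum_divisors_prime_pow hp]
  exact Finset.sum_congr rfl fun i _ => chi3_pow p i

lemma S_three_pow (k : ℕ) : S (3 ^ k) = 1 := by
  rw [S_prime_pow (by norm_num) k]
  have : chi3 3 = 0 := by simp [chi3]
  rw [this, Finset.sum_range_succ']
  simp

lemma S_one_mod3_pow {p : ℕ} (hp : p.Prime) (h1 : p % 3 = 1) (k : ℕ) :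
    S (p ^ k) = k + 1 := by
  rw [S_prime_pow hp k]
  have : chi3 p = 1 := by simp [chi3, h1]
  simp [this]

lemma S_two_mod3_pow_step {p : ℕ} (hp : p.Prime) (h2 : p % 3 = 2) (k : ℕ) :
    S (p ^ (k + 2)) = S (p ^ k) := by
  rw [S_prime_pow hp, S_prime_pow hp]
  have hc : chi3 p = -1 := by simp [chi3, h2]
  rw [hc]
  rw [show k + 2 + 1 = (k + 1) + 1 + 1 by ring, Finset.sum_range_succ, Finset.sum_range_succ]
  have : ((-1 : ℤ)) ^ (k + 1) + (-1 : ℤ) ^ (k + 1 + 1) = 0 := by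
    rw [pow_succ]; ring
  rw [add_assoc, this, add_zero]

lemma S_two_mod3_one {p : ℕ} (hp : p.Prime) (h2 : p % 3 = 2) : S (p ^ 1) = 0 := by
  rw [S_prime_pow hp]
  have hc : chi3 p = -1 := by simp [chi3, h2]
  rw [hc]; norm_num [Finset.sum_range_succ]

/-- decomposition of t by powers of p -/
lemma S_pow_mul {p : ℕ} (hp : p.Prime) (k : ℕ) {u : ℕ} (hu : ¬ p ∣ u) :
    S (p ^ k * u) = S (p ^ k) * S u :=
  S_mul_coprime (Nat.Coprime.pow_left _ ((Nat.Prime.coprime_iff_not_dvd hp).mpr hu))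

lemma S_three_mul (t : ℕ) (ht : 0 < t) : S (3 * t) = S t := by
  have hp : Nat.Prime 3 := by norm_num
  set b := t.factorization 3 with hb
  set u := t / 3 ^ b with hu
  have hdecomp : 3 ^ b * u = t := Nat.ordProj_mul_ordCompl_eq_self t 3
  have hnd : ¬ 3 ∣ u := Nat.not_dvd_ordCompl hp (by omega)
  have h1 : 3 * t = 3 ^ (b + 1) * u := by rw [← hdecomp]; ring
  rw [h1, S_pow_mul hp _ hnd, ← hdecomp, S_pow_mul hp _ hnd, S_three_pow, S_three_pow]

lemma S_inert_sq {p : ℕ} (hp : p.Prime) (h2 : p % 3 = 2) (t : ℕ) (ht : 0 < t) :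
    S (p * p * t) = S t := by
  set b := t.factorization p with hb
  set u := t / p ^ b with hu
  have hdecomp : p ^ b * u = t := Nat.ordProj_mul_ordCompl_eq_self t p
  have hnd : ¬ p ∣ u := Nat.not_dvd_ordCompl hp (by omega)
  have h1 : p * p * t = p ^ (b + 2) * u := by rw [← hdecomp]; ring
  rw [h1, S_pow_mul hp _ hnd, ← hdecomp, S_pow_mul hp _ hnd, S_two_mod3_pow_step hp h2]

lemma S_inert_once {p : ℕ} (hp : p.Prime) (h2 : p % 3 = 2) {n : ℕ} (hn : 0 < n)
    (hpn : p ∣ n) (hp2n : ¬ (p * p ∣ n)) : S n = 0 := by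
  set b := n.factorization p with hb
  set u := n / p ^ b with hu
  have hdecomp : p ^ b * u = n := Nat.ordProj_mul_ordCompl_eq_self n p
  have hnd : ¬ p ∣ u := Nat.not_dvd_ordCompl hp (by omega)
  have hb1 : b = 1 := by
    have hbge : 1 ≤ b := by
      rw [hb]
      exact (Nat.Prime.factorization_pos_of_dvd hp (by omega) hpn)
    by_contra hne
    have hbge2 : 2 ≤ b := by omega
    apply hp2n
    calc p * p = p ^ 2 := by ring
    _ ∣ p ^ b := pow_dvd_pow p hbge2
    _ ∣ n := ⟨u, hdecomp.symm⟩
  rw [← hdecomp, S_pow_mul hp _ hnd, hb1, S_two_mod3_one hp h2, zero_mul]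

lemma S_split {p : ℕ} (hp : p.Prime) (h1 : p % 3 = 1) (a : ℕ) {m : ℕ} (hm : ¬ p ∣ m) :
    S (p ^ a * m) = (a + 1) * S m := by
  rw [S_pow_mul hp _ hm, S_one_mod3_pow hp h1]

/-! ### Main count -/

lemma main_count : ∀ n : ℕ, 0 < n →
    (Nat.card {z : Eis // Nm z = (n : ℤ)} : ℤ) = 6 * S n := by
  intro n
  induction n using Nat.strong_induction_on with
  | _ n ih =>
    intro hn
    rcases eq_or_lt_of_le (show 1 ≤ n from hn) with h1 | h1
    · -- n = 1
      have hn1 : n = 1 := h1.symm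
      subst hn1
      rw [show ((1 : ℕ) : ℤ) = 1 by norm_num, card_one, S_one]
      norm_num
    · -- n > 1
      have hne1 : n ≠ 1 := by omega
      set p := n.minFac with hpdef
      have hp : p.Prime := Nat.minFac_prime hne1
      have hpn : p ∣ n := Nat.minFac_dvd n
      rcases (by omega : p % 3 = 0 ∨ p % 3 = 1 ∨ p % 3 = 2) with hmod | hmod | hmod
      · -- p = 3, so 3 ∣ n
        have h3 : (3 : ℕ) ∣ n := by
          have : (3 : ℕ) ∣ p := by omega
          exact this.trans hpn
        obtain ⟨t, ht3⟩ := h3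
        have ht : 0 < t := by omega
        have hcast : ((n : ℕ) : ℤ) = 3 * (t : ℤ) := by rw [ht3]; push_cast; ring
        rw [hcast, card_three, ht3, S_three_mul t ht]
        exact ih t (by omega) ht
      · -- split prime
        set a := n.factorization p with ha
        set m := n / p ^ a with hmdef
        have hdecomp : p ^ a * m = n := Nat.ordProj_mul_ordCompl_eq_self n p
        have hnd : ¬ p ∣ m := Nat.not_dvd_ordCompl hp (by omega)
        have hage : 1 ≤ a := Nat.Prime.factorization_pos_of_dvd hp (by omega) hpn
        have hm0 : 0 < m := by
          rcases Nat.eq_zero_or_pos m with h | h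
          · rw [h, mul_zero] at hdecomp; omega
          · exact h
        have hppow : 2 ≤ p ^ a := by
          calc 2 ≤ p := hp.two_le
          _ = p ^ 1 := (pow_one p).symm
          _ ≤ p ^ a := Nat.pow_le_pow_right hp.pos hage
        have hmlt : m < n := by
          have h2m : 2 * m ≤ n := by
            rw [← hdecomp]
            exact Nat.mul_le_mul_right m hppow
          omega
        have hcast : ((n : ℕ) : ℤ) = (p : ℤ) ^ a * (m : ℤ) := by
          rw [← hdecomp]; push_cast; ring
        rw [hcast, card_split hp hmod a m hnd, ← hdecomp, S_split hp hmod a hnd]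
        have := ih m hmlt hm0
        push_cast
        rw [this]
        ring
      · -- inert prime
        by_cases hsq : p * p ∣ n
        · obtain ⟨t, ht'⟩ := hsq
          have ht : 0 < t := by
            rcases Nat.eq_zero_or_pos t with h | h
            · rw [h, mul_zero] at ht'; omega
            · exact h
          have hcast : ((n : ℕ) : ℤ) = ((p : ℤ) * p) * (t : ℤ) := by rw [ht']; push_cast; ring
          rw [hcast, card_inert hp hmod, ht', S_inert_sq hp hmod t ht]
          refine ih t ?_ ht
          have h4 : 4 ≤ p * p := le_trans (by norm_num) (Nat.mul_le_mul hp.two_le hp.two_le)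
          have h2t : 2 * t ≤ p * p * t := Nat.mul_le_mul_right t (by omega)
          omega
        · rw [card_inert_odd hp hmod hpn hsq, S_inert_once hp hmod hn hpn hsq]
          simp

end Eis
def eisEquivPairs (n : ℤ) :
    {p : ℤ × ℤ // p.1 ^ 2 + p.1 * p.2 + p.2 ^ 2 = n} ≃ {z : Eis // Eis.Nm z = n} where
  toFun x := ⟨⟨x.1.1, x.1.2⟩, by
    have h := x.2
    show x.1.1 * x.1.1 + x.1.1 * x.1.2 + x.1.2 * x.1.2 = n
    linear_combination h⟩
  invFun z := ⟨(z.1.re, z.1.im), by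
    have h := z.2
    show z.1.re ^ 2 + z.1.re * z.1.im + z.1.im ^ 2 = n
    have h2 : z.1.re * z.1.re + z.1.re * z.1.im + z.1.im * z.1.im = n := h
    linear_combination h2⟩
  left_inv x := rfl
  right_inv z := rfl

theorem stmt0 (n : ℕ) (hn : 0 < n) :
    (Nat.card {p : ℤ × ℤ // p.1 ^ 2 + p.1 * p.2 + p.2 ^ 2 = (n : ℤ)} : ℤ)
      = 6 * ∑ d ∈ n.divisors, chi3 d := by
  rw [Nat.card_congr (eisEquivPairs (n : ℤ))]
  exact Eis.main_count n hn
end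

section
/- For every nonzero integer a there exists a constant C_a > 0 such that for all real x ≥ 1, there exists an integer n in the interval [x, x + C_a·x^{1/2}] with n a sum of two squares and n + a a sum of two squares. -/
theorem stmt1 (a : ℤ) (ha : a ≠ 0) :
    ∃ C : ℝ, 0 < C ∧ ∀ x : ℝ, 1 ≤ x → ∃ n : ℤ,
      x ≤ (n : ℝ) ∧ (n : ℝ) ≤ x + C * x ^ ((1 : ℝ) / 2) ∧
      (∃ u v : ℤ, n = u ^ 2 + v ^ 2) ∧ (∃ u v : ℤ, n + a = u ^ 2 + v ^ 2) := by
  rcases Int.even_or_odd a with ⟨b, hb⟩ | ⟨k, hk⟩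
  · -- even case : a = 2(d+1) with d = b - 1
    set d : ℤ := b - 1 with hd
    set E : ℤ := |d| + 1 with hE
    have hE1 : (1 : ℝ) ≤ (E : ℝ) := by
      exact_mod_cast (by have := abs_nonneg d; omega : (1:ℤ) ≤ E)
    have hdE : (d : ℝ) ≤ (E : ℝ) - 1 := by
      have h : d ≤ E - 1 := by have := le_abs_self d; omega
      exact_mod_cast h
    have hdE' : -((E : ℝ) - 1) ≤ (d : ℝ) := by
      have h : -(E - 1) ≤ d := by have := neg_abs_le d; omega
      exact_mod_cast h
    refine ⟨8 * (E : ℝ) + 8 * (E : ℝ) ^ 2, by nlinarith, ?_⟩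
    intro x hx
    have hx0 : (0:ℝ) ≤ x := by linarith
    have hx2 : (0:ℝ) ≤ x / 2 := by linarith
    set s : ℝ := Real.sqrt (x / 2) with hs
    have hs0 : 0 ≤ s := Real.sqrt_nonneg _
    have hssq : s ^ 2 = x / 2 := Real.sq_sqrt hx2
    have hsx : s ≤ Real.sqrt x := Real.sqrt_le_sqrt (by linarith)
    have hx1 : (1:ℝ) ≤ Real.sqrt x := by
      rw [show (1:ℝ) = Real.sqrt 1 by simp]
      exact Real.sqrt_le_sqrt hx
    have hrx : x ^ ((1:ℝ)/2) = Real.sqrt x := (Real.sqrt_eq_rpow x).symm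
    set m : ℤ := ⌈s⌉ with hm
    have hms : s ≤ (m : ℝ) := Int.le_ceil s
    have hms' : (m : ℝ) ≤ s + 1 := le_of_lt (Int.ceil_lt_add_one s)
    set v : ℤ := m + E with hv
    refine ⟨v ^ 2 + (v + d) ^ 2, ?_, ?_, ⟨v, v + d, rfl⟩, ⟨v - 1, v + d + 1, by
      have : a = 2 * d + 2 := by rw [hd]; linarith [hb]
      rw [this]; ring⟩⟩
    · -- lower bound
      have h1 : s ≤ (v : ℝ) := by push_cast [hv]; linarith
      have h2 : s ≤ (v : ℝ) + (d : ℝ) := by push_cast [hv]; nlinarith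
      push_cast
      nlinarith
    · -- upper bound
      have h1 : (v : ℝ) ≤ s + 2 * (E : ℝ) := by push_cast [hv]; linarith
      have h2 : (v : ℝ) + (d : ℝ) ≤ s + 2 * (E : ℝ) := by push_cast [hv]; linarith
      have h1' : 0 ≤ (v : ℝ) := by push_cast [hv]; linarith
      have h2' : 0 ≤ (v : ℝ) + (d : ℝ) := by push_cast [hv]; nlinarith
      rw [hrx]
      push_cast
      nlinarith [hsx, hx1, hE1, hs0, Real.sqrt_nonneg x]
  · -- odd case : a = 2k+1
    refine ⟨3 + (k : ℝ) ^ 2, by positivity, ?_⟩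
    intro x hx
    have hx0 : (0:ℝ) ≤ x := by linarith
    set s : ℝ := Real.sqrt x with hs
    have hs0 : 0 ≤ s := Real.sqrt_nonneg _
    have hssq : s ^ 2 = x := Real.sq_sqrt hx0
    have hx1 : (1:ℝ) ≤ s := by
      rw [hs, show (1:ℝ) = Real.sqrt 1 by simp]
      exact Real.sqrt_le_sqrt hx
    have hrx : x ^ ((1:ℝ)/2) = s := (Real.sqrt_eq_rpow x).symm
    set m : ℤ := ⌈s⌉ with hm
    have hms : s ≤ (m : ℝ) := Int.le_ceil s
    have hms' : (m : ℝ) ≤ s + 1 := le_of_lt (Int.ceil_lt_add_one s)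
    refine ⟨m ^ 2 + k ^ 2, ?_, ?_, ⟨m, k, rfl⟩, ⟨m, k + 1, by rw [hk]; ring⟩⟩
    · push_cast; nlinarith
    · rw [hrx]; push_cast; nlinarith
end

section
/- A positive integer n is representable as x² + xy + y² with x, y ∈ ℤ if and only if for every prime p with p = 2 or p ≡ 5 (mod 6), the p-adic valuation ν_p(n) is even. -/
private lemma rep_mul {m n : ℤ} (hm : ∃ x y : ℤ, m = x ^ 2 + x * y + y ^ 2)
    (hn : ∃ x y : ℤ, n = x ^ 2 + x * y + y ^ 2) :
    ∃ x y : ℤ, m * n = x ^ 2 + x * y + y ^ 2 := by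
  obtain ⟨a, b, rfl⟩ := hm
  obtain ⟨c, d, rfl⟩ := hn
  exact ⟨a * c - b * d, a * d + b * c + b * d, by ring⟩

private lemma rep_pow {m : ℤ} (hm : ∃ x y : ℤ, m = x ^ 2 + x * y + y ^ 2) (k : ℕ) :
    ∃ x y : ℤ, m ^ k = x ^ 2 + x * y + y ^ 2 := by
  induction k with
  | zero => exact ⟨1, 0, by ring⟩
  | succ k ih => rw [pow_succ]; exact rep_mul ih hm

set_option maxHeartbeats 1000000 in
private lemma good_rep {p : ℕ} (hp : p.Prime) (h3 : p % 3 = 1) :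
    ∃ x y : ℤ, (p : ℤ) = x ^ 2 + x * y + y ^ 2 := by
  haveI : Fact p.Prime := ⟨hp⟩
  haveI : Fact (Nat.Prime 3) := ⟨by norm_num⟩
  -- get element of order 3
  have hdvd : 3 ∣ Fintype.card (ZMod p)ˣ := by
    rw [ZMod.card_units_eq_totient, Nat.totient_prime hp]
    omega
  obtain ⟨g, hg⟩ := exists_prime_orderOf_dvd_card 3 hdvd
  set u : ZMod p := (g : ZMod p) with hu
  have hu3 : u ^ 3 = 1 := by
    have := pow_orderOf_eq_one g
    rw [hg] at this
    have : ((g ^ 3 : (ZMod p)ˣ) : ZMod p) = ((1 : (ZMod p)ˣ) : ZMod p) := by rw [this]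
    simpa using this
  have hune : u ≠ 1 := by
    intro h
    have : g = 1 := Units.ext h
    rw [this, orderOf_one] at hg
    norm_num at hg
  have hueq : u ^ 2 + u + 1 = 0 := by
    have h1 : (u - 1) * (u ^ 2 + u + 1) = 0 := by linear_combination hu3
    rcases mul_eq_zero.mp h1 with h | h
    · exact absurd (by linear_combination h) hune
    · exact h
  clear hu3 hune hu hg
  set r : ℕ := Nat.sqrt p with hr
  clear_value r
  -- pigeonhole
  have hcard : Fintype.card (ZMod p) < ((Finset.range (r+1)) ×ˢ (Finset.range (r+1))).card := by
    rw [ZMod.card, Finset.card_product, Finset.card_range]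
    have := Nat.lt_succ_sqrt' p
    nlinarith [this]
  obtain ⟨⟨x₁, y₁⟩, hm1, ⟨x₂, y₂⟩, hm2, hne, heq⟩ :=
    Finset.exists_ne_map_eq_of_card_lt_of_maps_to
      (s := (Finset.range (r+1)) ×ˢ (Finset.range (r+1)))
      (t := (Finset.univ : Finset (ZMod p)))
      (f := fun z => (z.1 : ZMod p) - u * (z.2 : ZMod p))
      (by simpa using hcard)
      (fun z _ => Finset.mem_univ _)
  simp only [Finset.mem_product, Finset.mem_range] at hm1 hm2
  set a : ℤ := (x₁ : ℤ) - (x₂ : ℤ) with ha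
  set b : ℤ := (y₁ : ℤ) - (y₂ : ℤ) with hb
  have hab : ((a : ZMod p)) = u * ((b : ZMod p)) := by
    push_cast [ha, hb]
    have h' : (x₁ : ZMod p) - u * (y₁ : ZMod p) = (x₂ : ZMod p) - u * (y₂ : ZMod p) := heq
    ring_nf
    ring_nf at h'
    linear_combination h'
  have hdvdQ : (p : ℤ) ∣ a ^ 2 + a * b + b ^ 2 := by
    have : ((a ^ 2 + a * b + b ^ 2 : ℤ) : ZMod p) = 0 := by
      push_cast
      rw [hab]
      linear_combination ((b : ZMod p))^2 * hueq
    exact (ZMod.intCast_zmod_eq_zero_iff_dvd _ p).mp this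
  clear_value a b
  have habne : a ≠ 0 ∨ b ≠ 0 := by
    by_contra h
    push_neg at h
    apply hne
    have h1 : x₁ = x₂ := by omega
    have h2 : y₁ = y₂ := by omega
    simp [h1, h2]
  have hQpos : 0 < a ^ 2 + a * b + b ^ 2 := by
    rcases habne with h | h
    · nlinarith [sq_nonneg (a + 2*b), sq_nonneg a, sq_pos_of_ne_zero h]
    · nlinarith [sq_nonneg (2*a + b), sq_nonneg b, sq_pos_of_ne_zero h]
  have hrp : (r : ℤ) * r < (p : ℤ) := by
    have h1 : r * r ≤ p := by rw [hr]; simpa [pow_two] using Nat.sqrt_le' p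
    have h2 : r * r ≠ p := by
      intro h
      have h2le := hp.two_le
      rcases (Nat.Prime.eq_one_or_self_of_dvd hp r ⟨r, h.symm⟩) with h' | h'
      · subst h'; omega
      · subst h'; nlinarith
    exact_mod_cast lt_of_le_of_ne h1 h2
  have hx1 : (x₁ : ℤ) ≤ (r : ℤ) := by exact_mod_cast Nat.lt_succ_iff.mp hm1.1
  have hx2 : (x₂ : ℤ) ≤ (r : ℤ) := by exact_mod_cast Nat.lt_succ_iff.mp hm2.1
  have hy1 : (y₁ : ℤ) ≤ (r : ℤ) := by exact_mod_cast Nat.lt_succ_iff.mp hm1.2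
  have hy2 : (y₂ : ℤ) ≤ (r : ℤ) := by exact_mod_cast Nat.lt_succ_iff.mp hm2.2
  have hx1' : (0:ℤ) ≤ (x₁ : ℤ) := Int.natCast_nonneg _
  have hx2' : (0:ℤ) ≤ (x₂ : ℤ) := Int.natCast_nonneg _
  have hy1' : (0:ℤ) ≤ (y₁ : ℤ) := Int.natCast_nonneg _
  have hy2' : (0:ℤ) ≤ (y₂ : ℤ) := Int.natCast_nonneg _
  have hax : |a| ≤ (r : ℤ) := by
    rw [abs_le, ha]; constructor <;> linarith
  have hbx : |b| ≤ (r : ℤ) := by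
    rw [abs_le, hb]; constructor <;> linarith
  have hQlt : a ^ 2 + a * b + b ^ 2 < 3 * (p : ℤ) := by
    have h1 : a * b ≤ |a| * |b| := le_trans (le_abs_self _) (abs_mul a b).le
    have h2 : a^2 = |a| * |a| := by rw [← abs_mul, abs_mul_self]; ring
    have h3 : b^2 = |b| * |b| := by rw [← abs_mul, abs_mul_self]; ring
    nlinarith [abs_nonneg a, abs_nonneg b]
  -- Q = k * p with k = 1 or 2; exclude 2 via mod 4
  obtain ⟨k, hk⟩ := hdvdQ
  clear hab heq hcard hueq hne
  have hppos : (0:ℤ) < (p:ℤ) := by exact_mod_cast hp.pos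
  have hk0 : 0 < k := by
    by_contra h
    push_neg at h
    have h2 : (p:ℤ) * k ≤ 0 := mul_nonpos_of_nonneg_of_nonpos hppos.le h
    linarith
  have hk3 : k < 3 := by
    have h2 : (p:ℤ) * k < (p:ℤ) * 3 := by linarith
    exact lt_of_mul_lt_mul_left h2 hppos.le
  have hkne2 : k ≠ 2 := by
    intro hk2
    subst hk2
    have hpodd : p % 2 = 1 := by
      rcases hp.eq_two_or_odd with h | h
      · omega
      · exact h
    have hp4 : p % 4 = 1 ∨ p % 4 = 3 := by omega
    have hcast : ((a ^ 2 + a * b + b ^ 2 : ℤ) : ZMod 4) = 2 * ((p : ℕ) : ZMod 4) := by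
      rw [hk]; push_cast; ring
    rw [show ((p : ℕ) : ZMod 4) = (((p % 4 : ℕ)) : ZMod 4) from (ZMod.natCast_mod p 4).symm] at hcast
    set A : ZMod 4 := (a : ZMod 4)
    set B : ZMod 4 := (b : ZMod 4)
    have hcast' : A ^ 2 + A * B + B ^ 2 = 2 * (((p % 4 : ℕ)) : ZMod 4) := by
      push_cast at hcast; exact hcast
    have key : ∀ A B : ZMod 4, A^2+A*B+B^2 ≠ 2*(((1:ℕ)) : ZMod 4) ∧
        A^2+A*B+B^2 ≠ 2*(((3:ℕ)) : ZMod 4) := by decide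
    rcases hp4 with h | h
    · rw [h] at hcast'; exact (key A B).1 hcast'
    · rw [h] at hcast'; exact (key A B).2 hcast'
  have hk1 : k = 1 := by omega
  rw [hk1, mul_one] at hk
  exact ⟨a, b, hk.symm⟩

private lemma bad_dvd {p : ℕ} (hp : p.Prime) (h3 : p % 3 = 2) {x y : ℤ}
    (h : (p:ℤ) ∣ x ^ 2 + x * y + y ^ 2) : (p:ℤ) ∣ x ∧ (p:ℤ) ∣ y := by
  haveI : Fact p.Prime := ⟨hp⟩
  haveI : Fact (Nat.Prime 3) := ⟨by norm_num⟩
  set X : ZMod p := (x : ZMod p) with hX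
  set Y : ZMod p := (y : ZMod p) with hY
  have h0 : X ^ 2 + X * Y + Y ^ 2 = 0 := by
    have := (ZMod.intCast_zmod_eq_zero_iff_dvd _ p).mpr h
    push_cast at this
    exact this
  have hy : Y = 0 := by
    by_contra hy
    set t : ZMod p := X * Y⁻¹ with ht
    have hYY : Y * Y⁻¹ = 1 := ZMod.mul_inv_of_unit Y (Ne.isUnit hy)
    have ht1 : t ^ 2 + t + 1 = 0 := by
      rw [ht]
      have : (X * Y⁻¹) ^ 2 + X * Y⁻¹ + 1 = (X ^ 2 + X * Y + Y ^ 2) * Y⁻¹ ^ 2 := by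
        linear_combination (-(X * Y⁻¹) - Y * Y⁻¹ - 1) * hYY
      rw [this, h0, zero_mul]
    have ht3 : t ^ 3 = 1 := by linear_combination (t - 1) * ht1
    have htne : t ≠ 1 := by
      intro h1
      rw [h1] at ht1
      have h31 : ((3:ℕ) : ZMod p) = 0 := by push_cast; linear_combination ht1
      have := (ZMod.natCast_eq_zero_iff 3 p).mp h31
      have := (Nat.prime_dvd_prime_iff_eq hp (by norm_num)).mp this
      omega
    have hord : orderOf t = 3 := orderOf_eq_prime ht3 htne
    have htne0 : t ≠ 0 := by
      intro h1
      rw [h1] at ht3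
      simp at ht3
    have hpow : t ^ (p - 1) = 1 := ZMod.pow_card_sub_one_eq_one htne0
    have hdvd : 3 ∣ p - 1 := hord ▸ orderOf_dvd_of_pow_eq_one hpow
    have := hp.two_le
    omega
  rw [hy] at h0
  have hx : X = 0 := by
    have : X ^ 2 = 0 := by linear_combination h0
    exact pow_eq_zero_iff (by norm_num) |>.mp this
  constructor
  · exact (ZMod.intCast_zmod_eq_zero_iff_dvd x p).mp hx
  · exact (ZMod.intCast_zmod_eq_zero_iff_dvd y p).mp hy

private lemma forward : ∀ n : ℕ, 0 < n → (∃ x y : ℤ, (n:ℤ) = x ^ 2 + x * y + y ^ 2) →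
    ∀ p : ℕ, p.Prime → p % 3 = 2 → Even (n.factorization p) := by
  intro n
  induction n using Nat.strong_induction_on with
  | _ n ih =>
    intro hn hrep p hp hp3
    by_cases hdvd : p ∣ n
    · obtain ⟨x, y, hxy⟩ := hrep
      have hdvd' : (p:ℤ) ∣ x ^ 2 + x * y + y ^ 2 := by
        rw [← hxy]; exact_mod_cast Int.natCast_dvd_natCast.mpr hdvd
      obtain ⟨⟨x', hx'⟩, ⟨y', hy'⟩⟩ := bad_dvd hp hp3 hdvd'
      have hp0 : (0:ℤ) < (p:ℤ) := by exact_mod_cast hp.pos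
      have hnsq : (n : ℤ) = (p:ℤ)^2 * (x' ^ 2 + x' * y' + y' ^ 2) := by
        rw [hxy, hx', hy']; ring
      have hsqdvd : p ^ 2 ∣ n := by
        have : ((p:ℕ)^2 : ℤ) ∣ (n : ℤ) := ⟨_, by push_cast; exact hnsq⟩
        exact_mod_cast Int.natCast_dvd_natCast.mp (by exact_mod_cast this)
      obtain ⟨m, hm⟩ := hsqdvd
      have hp1 : 1 < p := hp.one_lt
      have hm0 : 0 < m := by
        rcases Nat.eq_zero_or_pos m with h | h
        · subst h; simp at hm; omega
        · exact h
      have hmrep : ∃ x y : ℤ, (m:ℤ) = x ^ 2 + x * y + y ^ 2 := by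
        refine ⟨x', y', ?_⟩
        have hcast : ((p:ℤ))^2 * (m:ℤ) = (p:ℤ)^2 * (x' ^ 2 + x' * y' + y' ^ 2) := by
          rw [← hnsq, hm]; push_cast; ring
        exact mul_left_cancel₀ (by positivity) hcast
      have hmlt : m < n := by
        have h12 : 1 < p ^ 2 := by nlinarith
        calc m < p ^ 2 * m := (Nat.lt_mul_iff_one_lt_left hm0).mpr h12
        _ = n := hm.symm
      have heven := ih m hmlt hm0 hmrep p hp hp3
      have hfact : n.factorization p = 2 + m.factorization p := by
        rw [hm, Nat.factorization_mul (by positivity) (by omega)]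
        simp [Nat.Prime.factorization_pow, hp.factorization]
      rw [hfact]
      exact (even_two).add heven
    · rw [Nat.factorization_eq_zero_of_not_dvd hdvd]
      exact Even.zero

private lemma backward : ∀ n : ℕ, 0 < n →
    (∀ p : ℕ, p.Prime → p % 3 = 2 → Even (n.factorization p)) →
    ∃ x y : ℤ, (n:ℤ) = x ^ 2 + x * y + y ^ 2 := by
  intro n
  induction n using Nat.strong_induction_on with
  | _ n ih =>
    intro hn hcond
    rcases eq_or_lt_of_le (show 1 ≤ n from hn) with h1 | h1
    · exact ⟨1, 0, by rw [← h1]; norm_num⟩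
    · -- n ≥ 2
      have hn1 : n ≠ 1 := by omega
      obtain ⟨p, hpdef⟩ : ∃ q, q = n.minFac := ⟨_, rfl⟩
      have hp : p.Prime := hpdef ▸ Nat.minFac_prime hn1
      have hpd : p ∣ n := hpdef ▸ Nat.minFac_dvd n
      obtain ⟨k, hkdef⟩ : ∃ j, j = n.factorization p := ⟨_, rfl⟩
      have hk0 : 0 < k := by
        rw [hkdef]
        exact Nat.Prime.factorization_pos_of_dvd hp (by omega) hpd
      obtain ⟨m, hmdef⟩ : ∃ w, w = n / p ^ k := ⟨_, rfl⟩
      have hpkd : p ^ k ∣ n := by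
        rw [hkdef]; exact Nat.ordProj_dvd n p
      have hnm : n = p ^ k * m := by
        rw [hmdef, Nat.mul_div_cancel' hpkd]
      have hm0 : 0 < m := by
        rcases Nat.eq_zero_or_pos m with h | h
        · rw [h, mul_zero] at hnm; omega
        · exact h
      have hplt : 1 < p := hp.one_lt
      have hpk1 : 1 < p ^ k := Nat.one_lt_pow (by omega) hplt
      have hmlt : m < n := by
        calc m < p ^ k * m := (Nat.lt_mul_iff_one_lt_left hm0).mpr hpk1
        _ = n := hnm.symm
      have hmfact : ∀ q : ℕ, q.Prime → q % 3 = 2 → Even (m.factorization q) := by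
        intro q hq hq3
        by_cases hqp : q = p
        · subst hqp
          have hnd : ¬ q ∣ m := by
            rw [hmdef, hkdef]
            exact Nat.not_dvd_ordCompl hp (by omega)
          rw [Nat.factorization_eq_zero_of_not_dvd hnd]
          exact Even.zero
        · have : m.factorization q = n.factorization q := by
            rw [hmdef, hkdef, Nat.factorization_ordCompl n p]
            exact Finsupp.erase_ne hqp
          rw [this]
          exact hcond q hq hq3
      have hmrep := ih m hmlt hm0 hmfact
      have hprep : ∃ x y : ℤ, ((p:ℤ))^k = x ^ 2 + x * y + y ^ 2 := by
        rcases Nat.lt_trichotomy (p % 3) 2 with h | h | h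
        · interval_cases h' : p % 3
          · -- p % 3 = 0 → p = 3
            have : p = 3 := by
              have := (Nat.prime_dvd_prime_iff_eq (by norm_num) hp).mp
                (Nat.dvd_of_mod_eq_zero h')
              omega
            subst this
            exact rep_pow ⟨1, 1, by norm_num⟩ k
          · exact rep_pow (good_rep hp h') k
        · -- p % 3 = 2 : k even
          have hkeven : Even k := hkdef ▸ hcond p hp h
          obtain ⟨j, hj⟩ := hkeven
          exact ⟨(p:ℤ)^j, 0, by rw [hj]; ring⟩
        · omega
      obtain ⟨x, y, hxy⟩ := hprep
      have : (n:ℤ) = ((p:ℤ))^k * (m:ℤ) := by rw [hnm]; push_cast; ring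
      rw [this]
      exact rep_mul ⟨x, y, hxy⟩ hmrep

theorem stmt5 (n : ℕ) (hn : 0 < n) :
    (∃ x y : ℤ, (n : ℤ) = x ^ 2 + x * y + y ^ 2) ↔
      ∀ p : ℕ, p.Prime → (p = 2 ∨ p % 6 = 5) → Even (n.factorization p) := by
  constructor
  · intro hrep p hp hcase
    apply forward n hn hrep p hp
    rcases hcase with h | h
    · omega
    · omega
  · intro hcond
    apply backward n hn
    intro p hp hp3
    apply hcond p hp
    rcases hp.eq_two_or_odd with h | h
    · exact Or.inl h
    · right; omega
end

section
/- If a = n² - 3m² for some integers n, m, then for every integer s, the number s² + 3m² is representable as x² + xy + y² and s² + 3m² + a = s² + n² is a sum of two squares; in particular, every interval [x, x + C·x^{1/2}] with x ≥ 1 contains an element of S(△, □₂, a) for some constant C depending on a. -/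
theorem stmt9 (a n m : ℤ) (ha : a = n ^ 2 - 3 * m ^ 2) :
    (∀ s : ℤ, (∃ x y : ℤ, s ^ 2 + 3 * m ^ 2 = x ^ 2 + x * y + y ^ 2) ∧
      s ^ 2 + 3 * m ^ 2 + a = s ^ 2 + n ^ 2 ∧
      (∃ u v : ℤ, s ^ 2 + 3 * m ^ 2 + a = u ^ 2 + v ^ 2)) ∧
    ∃ C : ℝ, 0 < C ∧ ∀ x : ℝ, 1 ≤ x → ∃ k : ℤ,
      x ≤ (k : ℝ) ∧ (k : ℝ) ≤ x + C * x ^ ((1 : ℝ) / 2) ∧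
      (∃ x' y' : ℤ, k = x' ^ 2 + x' * y' + y' ^ 2) ∧
      (∃ u v : ℤ, k + a = u ^ 2 + v ^ 2) := by
  constructor
  · intro s
    refine ⟨⟨s + m, m - s, by ring⟩, by rw [ha]; ring, s, n, by rw [ha]; ring⟩
  · refine ⟨3 + 3 * (m : ℝ) ^ 2, by positivity, fun x hx => ?_⟩
    set t := Real.sqrt x with ht
    have hx0 : (0 : ℝ) ≤ x := by linarith
    have ht1 : 1 ≤ t := Real.le_sqrt' one_pos |>.mpr (by simpa using hx)
    set s : ℤ := ⌈t⌉ with hs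
    have hst : t ≤ (s : ℝ) := Int.le_ceil t
    have hs1 : (s : ℝ) ≤ t + 1 := le_of_lt (Int.ceil_lt_add_one t)
    refine ⟨s ^ 2 + 3 * m ^ 2, ?_, ?_, ⟨s + m, m - s, by ring⟩, s, n, by rw [ha]; ring⟩
    · push_cast
      have : x = t ^ 2 := by rw [ht, Real.sq_sqrt hx0]
      nlinarith [sq_nonneg (m : ℝ)]
    · push_cast
      rw [show x ^ ((1:ℝ)/2) = t from (Real.sqrt_eq_rpow x).symm]
      have hx2 : x = t ^ 2 := by rw [ht, Real.sq_sqrt hx0]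
      nlinarith [sq_nonneg (m : ℝ)]
end

section
/- Let a be a nonzero integer and p ≡ 1 (mod 4) a prime with ν_p(a) = k > 0. Then for 1 ≤ j ≤ k, η_a(p^j) = p^j·(1 + j(1 - 1/p)), and for j ≥ k + 1, η_a(p^j) = p^j·(1 + k)(1 - 1/p). -/
lemma exists_int_sq (p : ℕ) (hp : p.Prime) (hp1 : p % 4 = 1) (n : ℕ) :
    ∃ X : ℤ, (p:ℤ)^n ∣ X^2 + 1 := by
  haveI : Fact p.Prime := ⟨hp⟩
  induction n with
  | zero => exact ⟨0, by simp⟩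
  | succ n ih =>
    rcases Nat.eq_zero_or_pos n with hn | hn
    · subst hn
      have h4 : p % 4 ≠ 3 := by omega
      obtain ⟨y, hy⟩ := (ZMod.exists_sq_eq_neg_one_iff).2 h4
      refine ⟨(y.val : ℤ), ?_⟩
      rw [pow_one, ← ZMod.intCast_zmod_eq_zero_iff_dvd]
      push_cast
      simp only [ZMod.natCast_val, ZMod.cast_id]
      have : y ^ 2 = -1 := by rw [hy]; ring
      rw [this]; ring
    obtain ⟨X, e, he⟩ := ih
    have hpn : (p:ℤ) ∣ (p:ℤ)^n := dvd_pow_self _ hn.ne'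
    have hpX : ¬ ((p:ℤ) ∣ X) := by
      intro h
      have h1 : (p:ℤ) ∣ X^2 + 1 := he ▸ hpn.mul_right e
      have h2 : (p:ℤ) ∣ X^2 := by rw [sq]; exact h.mul_left X
      have h3 : (p:ℤ) ∣ 1 := by
        have := dvd_sub h1 h2; simpa using this
      have := Int.le_of_dvd one_pos h3
      have := hp.two_le
      omega
    -- solve 2*X*δ + e ≡ 0 mod p
    have hp2 : ¬ ((p:ℤ) ∣ 2) := by
      intro h
      have h2 : (p:ℤ) ≤ 2 := Int.le_of_dvd (by norm_num) h
      have h3 : p ≤ 2 := by exact_mod_cast h2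
      have := hp.two_le
      omega
    have h2X : ((2 * X : ℤ) : ZMod p) ≠ 0 := by
      rw [Ne, ZMod.intCast_zmod_eq_zero_iff_dvd]
      intro h
      rcases (Int.Prime.dvd_mul' (by exact_mod_cast hp) h) with h | h
      · exact hp2 h
      · exact hpX h
    obtain ⟨d, hd⟩ : ∃ d : ZMod p, ((2*X : ℤ) : ZMod p) * d = ((-e : ℤ) : ZMod p) :=
      ⟨((2*X : ℤ) : ZMod p)⁻¹ * ((-e : ℤ) : ZMod p), by
        rw [← mul_assoc, mul_inv_cancel₀ h2X, one_mul]⟩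
    set δ : ℤ := (d.val : ℤ) with hδ
    have hdiv : (p:ℤ) ∣ 2*X*δ + e := by
      rw [← ZMod.intCast_zmod_eq_zero_iff_dvd]
      push_cast
      have : ((δ : ℤ) : ZMod p) = d := by
        simp [hδ, ZMod.natCast_val, ZMod.cast_id]
      push_cast at hd
      rw [this]
      rw [hd]; ring
    obtain ⟨c, hc⟩ := hdiv
    refine ⟨X + p^n * δ, p^(n-1) * δ^2 + c, ?_⟩
    have hXe : X^2 + 1 = p^n * e := he
    have hpow : (p:ℤ)^(n+1) = p * p^n := by ring
    have hpow2 : (p:ℤ)^n = p * p^(n-1) := by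
      rw [← pow_succ']
      congr 1; omega
    have key : (p:ℤ)^n * (p:ℤ)^n = (p:ℤ)^(n+1) * (p:ℤ)^(n-1) := by
      rw [← pow_add, ← pow_add]; congr 1; omega
    calc (X + p^n*δ)^2 + 1 = (X^2 + 1) + p^n * (2*X*δ) + ((p:ℤ)^n * (p:ℤ)^n) * δ^2 := by ring
    _ = p^n * (2*X*δ + e) + ((p:ℤ)^n * (p:ℤ)^n) * δ^2 := by rw [hXe]; ring
    _ = p^n * (p * c) + ((p:ℤ)^(n+1) * (p:ℤ)^(n-1)) * δ^2 := by rw [hc, key]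
    _ = (p:ℤ)^(n+1) * (p^(n-1) * δ^2 + c) := by rw [hpow]; ring


lemma exists_sqrt_neg_one (p : ℕ) (hp : p.Prime) (hp1 : p % 4 = 1) (n : ℕ)
    (h : ∃ X : ℤ, (p:ℤ)^n ∣ X^2 + 1) :
    ∃ i : ZMod (p^n), i^2 = -1 := by
  obtain ⟨X, hX⟩ := h
  refine ⟨((X : ZMod (p^n))), ?_⟩
  have h0 : ((X^2 + 1 : ℤ) : ZMod (p^n)) = 0 := by
    rw [ZMod.intCast_zmod_eq_zero_iff_dvd]; exact_mod_cast hX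
  push_cast at h0
  linear_combination h0

lemma card_sq_eq_card_mul (p : ℕ) (hp : p.Prime) (hp1 : p % 4 = 1) (n : ℕ)
    (hex : ∃ i : ZMod (p^n), i^2 = -1) (c : ZMod (p^n)) :
    Nat.card {x : ZMod (p^n) × ZMod (p^n) // x.1^2 + x.2^2 = c}
      = Nat.card {x : ZMod (p^n) × ZMod (p^n) // x.1 * x.2 = c} := by
  obtain ⟨i, hi⟩ := hex
  have hodd : Odd (p^n) := by
    refine Odd.pow ?_
    rw [Nat.odd_iff]; omega
  have h2u : IsUnit (2 : ZMod (p^n)) := by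
    rw [show ((2:ZMod (p^n))) = ((2:ℕ):ZMod (p^n)) by norm_cast, ZMod.isUnit_iff_coprime]
    rwa [Nat.coprime_two_left]
  obtain ⟨w, hw⟩ : ∃ w : ZMod (p^n), 2 * w = 1 := by
    obtain ⟨v, hv⟩ := h2u.exists_right_inv
    exact ⟨v, hv⟩
  have key : ∀ x y : ZMod (p^n), (x + i*y) * (x - i*y) = x^2 + y^2 := by
    intro x y; linear_combination (-(y^2)) * hi
  refine Nat.card_congr (Equiv.subtypeEquiv
    (⟨fun x => (x.1 + i*x.2, x.1 - i*x.2),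
      fun y => (w*(y.1+y.2), -i*w*(y.1-y.2)), ?_, ?_⟩ : _ ≃ _) ?_)
  · intro x
    ext
    · show w*((x.1 + i*x.2)+(x.1 - i*x.2)) = x.1
      linear_combination x.1 * hw
    · show -i*w*((x.1 + i*x.2)-(x.1 - i*x.2)) = x.2
      linear_combination (-2*w*x.2)*hi + x.2*hw
  · intro y
    ext
    · show (w*(y.1+y.2)) + i*(-i*w*(y.1-y.2)) = y.1
      linear_combination (-w*(y.1-y.2))*hi + y.1*hw
    · show (w*(y.1+y.2)) - i*(-i*w*(y.1-y.2)) = y.2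
      linear_combination (w*(y.1-y.2))*hi + y.2*hw
  · intro x
    show x.1 ^ 2 + x.2 ^ 2 = c ↔ (x.1 + i * x.2) * (x.1 - i * x.2) = c
    rw [key]


open Finset
open scoped Classical

lemma card_dvd_val (N d : ℕ) (hd : 0 < d) (hdN : d ∣ N) [NeZero N] :
    Nat.card {v : ZMod N // d ∣ v.val} = N / d := by
  have hb : ∀ w : Fin (N / d), d * w.1 < N := by
    intro w
    calc d * w.1 < d * (N / d) := mul_lt_mul_of_pos_left w.2 hd
    _ = N := Nat.mul_div_cancel' hdN
  have e : {v : ZMod N // d ∣ v.val} ≃ Fin (N / d) :=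
    { toFun := fun v => ⟨v.1.val / d, Nat.div_lt_div_of_lt_of_dvd hdN (ZMod.val_lt v.1)⟩
      invFun := fun w => ⟨((d * w.1 : ℕ) : ZMod N), by
        rw [ZMod.val_natCast, Nat.mod_eq_of_lt (hb w)]
        exact Dvd.intro _ rfl⟩
      left_inv := fun v => by
        ext
        simp only
        rw [Nat.mul_div_cancel' v.2, ZMod.natCast_val, ZMod.cast_id]
      right_inv := fun w => by
        ext
        simp only
        rw [ZMod.val_natCast, Nat.mod_eq_of_lt (hb w), Nat.mul_div_cancel_left _ hd] }
  rw [Nat.card_congr e, Nat.card_eq_fintype_card, Fintype.card_fin]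

section main
variable (p n : ℕ)

/-- valuation-like function on `ZMod (p^n)` -/
noncomputable def pval (u : ZMod (p^n)) : ℕ := if u = 0 then n else (u.val).factorization p

variable {p n}

namespace pvalaux

lemma NZ (hp : p.Prime) : NeZero (p^n) := ⟨pow_ne_zero _ hp.pos.ne'⟩

lemma pval_le (hp : p.Prime) (u : ZMod (p^n)) : pval p n u ≤ n := by
  haveI := NZ (n := n) hp
  unfold pval
  split_ifs with h
  · exact le_refl n
  · have hv : u.val ≠ 0 := fun hv => h ((ZMod.val_eq_zero u).1 hv)
    have h1 : p ^ (u.val).factorization p ∣ u.val := Nat.ordProj_dvd _ _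
    have h2 : p ^ (u.val).factorization p ≤ u.val := Nat.le_of_dvd (Nat.pos_of_ne_zero hv) h1
    have h3 : u.val < p ^ n := ZMod.val_lt u
    have := lt_of_le_of_lt h2 h3
    exact le_of_lt ((Nat.pow_lt_pow_iff_right hp.one_lt).1 this)

lemma dvd_val_iff (hp : p.Prime) {s : ℕ} (hs : s ≤ n) (u : ZMod (p^n)) :
    p ^ s ∣ u.val ↔ s ≤ pval p n u := by
  haveI := NZ (n := n) hp
  unfold pval
  split_ifs with h
  · subst h
    simp [ZMod.val_zero, hs]
  · have hv : u.val ≠ 0 := fun hv => h ((ZMod.val_eq_zero u).1 hv)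
    exact Nat.Prime.pow_dvd_iff_le_factorization hp hv

lemma decomp (hp : p.Prime) (u : ZMod (p^n)) :
    ∃ w : (ZMod (p^n))ˣ, u = (p : ZMod (p^n)) ^ (pval p n u) * w := by
  haveI := NZ (n := n) hp
  have hcast : ((u.val : ℕ) : ZMod (p^n)) = u := ZMod.natCast_rightInverse u
  unfold pval
  split_ifs with h
  · refine ⟨1, ?_⟩
    have : ((p : ZMod (p^n)))^n = ((p^n : ℕ) : ZMod (p^n)) := by push_cast; ring
    rw [h, this, ZMod.natCast_self, zero_mul]
  · have hv : u.val ≠ 0 := fun hv => h ((ZMod.val_eq_zero u).1 hv)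
    set t := (u.val).factorization p with ht
    have hcop : Nat.Coprime (u.val / p ^ t) (p^n) :=
      Nat.Coprime.pow_right _ ((Nat.coprime_ordCompl hp hv).symm)
    refine ⟨ZMod.unitOfCoprime _ hcop, ?_⟩
    rw [ZMod.coe_unitOfCoprime]
    have : (p:ZMod (p^n))^t * ((u.val / p ^ t : ℕ) : ZMod (p^n))
        = (((p^t * (u.val / p ^ t) : ℕ)) : ZMod (p^n)) := by push_cast; ring
    rw [this, Nat.ordProj_mul_ordCompl_eq_self, hcast]

lemma ker_card (hp : p.Prime) {s : ℕ} (hs : s ≤ n) :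
    Nat.card {v : ZMod (p^n) // (p : ZMod (p^n))^s * v = 0} = p ^ s := by
  haveI := NZ (n := n) hp
  have hiff : ∀ v : ZMod (p^n), (p : ZMod (p^n))^s * v = 0 ↔ p^(n-s) ∣ v.val := by
    intro v
    have hcast : (p : ZMod (p^n))^s * v = ((p^s * v.val : ℕ) : ZMod (p^n)) := by
      push_cast
      rw [ZMod.natCast_val, ZMod.cast_id]
    rw [hcast, ZMod.natCast_eq_zero_iff]
    constructor
    · intro hdvd
      have hps : (0:ℕ) < p^s := pow_pos hp.pos _
      have : p^s * p^(n-s) ∣ p^s * v.val := by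
        rw [← pow_add]
        rw [show s + (n-s) = n by omega]
        exact hdvd
      exact (Nat.mul_dvd_mul_iff_left hps).1 this
    · intro hdvd
      obtain ⟨e, he⟩ := hdvd
      refine ⟨e, ?_⟩
      rw [he, ← mul_assoc, ← pow_add, show s + (n-s) = n by omega]
  rw [Nat.card_congr (Equiv.subtypeEquivRight hiff),
    card_dvd_val _ _ (pow_pos hp.pos _) (pow_dvd_pow p (by omega : n - s ≤ n)),
    Nat.pow_div (by omega : n - s ≤ n) hp.pos, show n - (n - s) = s by omega]

lemma fiber_card (hp : p.Prime) {s : ℕ} (hs : s ≤ n) (d : ZMod (p^n)) :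
    Nat.card {v : ZMod (p^n) // (p : ZMod (p^n))^s * v = d}
      = if (p : ZMod (p^n))^s ∣ d then p ^ s else 0 := by
  split_ifs with h
  · obtain ⟨e, he⟩ := h
    have hiff : ∀ v : ZMod (p^n), (p : ZMod (p^n))^s * v = d ↔ (p : ZMod (p^n))^s * (v - e) = 0 := by
      intro v
      rw [mul_sub, sub_eq_zero, he]
    have e2 : {v : ZMod (p^n) // (p : ZMod (p^n))^s * (v - e) = 0}
        ≃ {v : ZMod (p^n) // (p : ZMod (p^n))^s * v = 0} :=
      Equiv.subtypeEquiv (Equiv.subRight e) (fun a => by simp [Equiv.subRight])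
    rw [Nat.card_congr ((Equiv.subtypeEquivRight hiff).trans e2)]
    exact ker_card hp hs
  · have : IsEmpty {v : ZMod (p^n) // (p : ZMod (p^n))^s * v = d} :=
      ⟨fun v => h ⟨v.1, v.2.symm⟩⟩
    exact Nat.card_of_isEmpty

lemma fiber_card_u (hp : p.Prime) (u : ZMod (p^n)) (d : ZMod (p^n)) :
    Nat.card {v : ZMod (p^n) // u * v = d}
      = if (p : ZMod (p^n))^(pval p n u) ∣ d then p ^ (pval p n u) else 0 := by
  obtain ⟨w, hw⟩ := decomp hp u
  set t := pval p n u
  have e : {v : ZMod (p^n) // u * v = d} ≃ {v : ZMod (p^n) // (p : ZMod (p^n))^t * v = d} :=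
    { toFun := fun v => ⟨(w : ZMod (p^n)) * v.1, by
        rw [← mul_assoc, ← hw]; exact v.2⟩
      invFun := fun v => ⟨((w⁻¹ : (ZMod (p^n))ˣ) : ZMod (p^n)) * v.1, by
        rw [hw]
        calc (p : ZMod (p^n))^t * (w : ZMod (p^n)) * (((w⁻¹ : (ZMod (p^n))ˣ) : ZMod (p^n)) * v.1)
            = (p : ZMod (p^n))^t * ((w : ZMod (p^n)) * ((w⁻¹ : (ZMod (p^n))ˣ) : ZMod (p^n))) * v.1 := by ring
        _ = (p : ZMod (p^n))^t * v.1 := by rw [w.mul_inv]; ring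
        _ = d := v.2⟩
      left_inv := fun v => by
        ext
        simp only
        rw [← mul_assoc, w.inv_mul, one_mul]
      right_inv := fun v => by
        ext
        simp only
        rw [← mul_assoc, w.mul_inv, one_mul] }
  rw [Nat.card_congr e]
  exact fiber_card hp (pval_le hp u) d


lemma card_ge [NeZero (p^n)] (hp : p.Prime) {s : ℕ} (hs : s ≤ n) :
    (univ.filter fun u : ZMod (p^n) => s ≤ pval p n u).card = p^(n-s) := by
  haveI := NZ (n := n) hp
  have h1 : (univ.filter fun u : ZMod (p^n) => s ≤ pval p n u)
      = (univ.filter fun u : ZMod (p^n) => p^s ∣ u.val) := by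
    apply filter_congr
    intro u _
    simp [dvd_val_iff hp hs u]
  rw [h1]
  clear h1
  have h2 := card_dvd_val (p^n) (p^s) (pow_pos hp.pos _) (pow_dvd_pow p hs)
  rw [Nat.card_eq_fintype_card, Fintype.card_subtype] at h2
  rw [Nat.pow_div hs hp.pos] at h2
  convert h2 using 2
lemma card_fiber_lt [NeZero (p^n)] (hp : p.Prime) {t : ℕ} (ht : t < n) :
    (univ.filter fun u : ZMod (p^n) => pval p n u = t).card = p^(n-t) - p^(n-t-1) := by
  have hsub : (univ.filter fun u : ZMod (p^n) => t+1 ≤ pval p n u)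
      ⊆ (univ.filter fun u : ZMod (p^n) => t ≤ pval p n u) := by
    intro u hu
    simp only [mem_filter] at hu ⊢
    exact ⟨hu.1, by omega⟩
  have heq : (univ.filter fun u : ZMod (p^n) => pval p n u = t)
      = (univ.filter fun u : ZMod (p^n) => t ≤ pval p n u)
        \ (univ.filter fun u : ZMod (p^n) => t+1 ≤ pval p n u) := by
    ext u
    simp only [mem_filter, mem_sdiff, mem_univ, true_and, not_le]
    omega
  rw [heq, card_sdiff_of_subset hsub, card_ge hp (le_of_lt ht), card_ge hp (by omega : t+1 ≤ n),
    show n - (t+1) = n - t - 1 by omega]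

lemma card_fiber_n [NeZero (p^n)] (hp : p.Prime) :
    (univ.filter fun u : ZMod (p^n) => pval p n u = n).card = 1 := by
  have heq : (univ.filter fun u : ZMod (p^n) => pval p n u = n)
      = (univ.filter fun u : ZMod (p^n) => n ≤ pval p n u) := by
    ext u
    have := pval_le hp u
    simp only [mem_filter, mem_univ, true_and]
    omega
  rw [heq, card_ge hp (le_refl n), Nat.sub_self, pow_zero]

lemma count_mul [NeZero (p^n)] (hp : p.Prime) (c : ZMod (p^n)) (m : ℕ)
    (hc : ∀ t, t ≤ n → ((p : ZMod (p^n))^t ∣ c ↔ t ≤ m)) :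
    Nat.card {x : ZMod (p^n) × ZMod (p^n) // x.1 * x.2 = c}
      = ∑ t ∈ range (n+1),
          (univ.filter fun u : ZMod (p^n) => pval p n u = t).card * (if t ≤ m then p^t else 0) := by
  rw [Nat.card_congr (Equiv.subtypeProdEquivSigmaSubtype (fun u v : ZMod (p^n) => u * v = c))]
  rw [Nat.card_eq_fintype_card, Fintype.card_sigma]
  have step : ∀ u : ZMod (p^n), Fintype.card {v : ZMod (p^n) // u * v = c}
      = if pval p n u ≤ m then p^(pval p n u) else 0 := by
    intro u
    rw [← Nat.card_eq_fintype_card, fiber_card_u hp u c]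
    have hcu := hc _ (pval_le hp u)
    split_ifs with h1 h2 h2
    · rfl
    · exact absurd (hcu.1 h1) h2
    · exact absurd (hcu.2 h2) h1
    · rfl
  rw [Finset.sum_congr rfl (fun u _ => step u)]
  rw [← Finset.sum_fiberwise_of_maps_to
    (fun u _ => Finset.mem_range.2 (Nat.lt_succ_of_le (pval_le hp u)))
    (fun u => if pval p n u ≤ m then p^(pval p n u) else 0)]
  apply Finset.sum_congr rfl
  intro t _
  rw [Finset.sum_congr rfl (fun u hu => by rw [(Finset.mem_filter.1 hu).2]),
    Finset.sum_const, smul_eq_mul]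

lemma count_case1 [NeZero (p^n)] (hp : p.Prime) (c : ZMod (p^n))
    (hc : ∀ t, t ≤ n → ((p : ZMod (p^n))^t ∣ c ↔ t ≤ n)) :
    Nat.card {x : ZMod (p^n) × ZMod (p^n) // x.1 * x.2 = c}
      = n * (p^n - p^(n-1)) + p^n := by
  rw [count_mul hp c n hc]
  rw [Finset.sum_range_succ]
  have hlast : (if n ≤ n then p^n else 0) = p^n := if_pos (le_refl n)
  rw [hlast, card_fiber_n hp, one_mul]
  congr 1
  have hterm : ∀ t ∈ range n,
      (univ.filter fun u : ZMod (p^n) => pval p n u = t).card * (if t ≤ n then p^t else 0)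
        = p^n - p^(n-1) := by
    intro t ht
    rw [mem_range] at ht
    rw [if_pos (by omega : t ≤ n), card_fiber_lt hp ht, Nat.sub_mul,
      ← pow_add, ← pow_add, show n-t+t = n by omega, show n-t-1+t = n-1 by omega]
  rw [Finset.sum_congr rfl hterm, Finset.sum_const, card_range, smul_eq_mul]

lemma count_case2 [NeZero (p^n)] (hp : p.Prime) (c : ZMod (p^n)) (m : ℕ) (hmn : m < n)
    (hc : ∀ t, t ≤ n → ((p : ZMod (p^n))^t ∣ c ↔ t ≤ m)) :
    Nat.card {x : ZMod (p^n) × ZMod (p^n) // x.1 * x.2 = c}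
      = (m+1) * (p^n - p^(n-1)) := by
  rw [count_mul hp c m hc]
  rw [← Finset.sum_subset (Finset.range_subset_range.2 (by omega : m+1 ≤ n+1))
    (fun t _ ht => by rw [if_neg (by simp [mem_range] at ht ⊢; omega), mul_zero])]
  have hterm : ∀ t ∈ range (m+1),
      (univ.filter fun u : ZMod (p^n) => pval p n u = t).card * (if t ≤ m then p^t else 0)
        = p^n - p^(n-1) := by
    intro t ht
    rw [mem_range] at ht
    rw [if_pos (by omega : t ≤ m), card_fiber_lt hp (by omega : t < n), Nat.sub_mul,
      ← pow_add, ← pow_add, show n-t+t = n by omega, show n-t-1+t = n-1 by omega]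
  rw [Finset.sum_congr rfl hterm, Finset.sum_const, card_range, smul_eq_mul]

end pvalaux
end main

lemma dvd_cast_iff [NeZero (p^n)] (a : ℤ) (hp : p.Prime) {t : ℕ} (ht : t ≤ n) :
    (p : ZMod (p^n))^t ∣ ((a : ZMod (p^n))) ↔ (p:ℤ)^t ∣ a := by
  constructor
  · rintro ⟨e, he⟩
    have h0 : ((a - (p:ℤ)^t * (e.val : ℤ) : ℤ) : ZMod (p^n)) = 0 := by
      push_cast
      rw [ZMod.natCast_val, ZMod.cast_id, ← he]
      ring
    rw [ZMod.intCast_zmod_eq_zero_iff_dvd] at h0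
    have h1 : (p:ℤ)^t ∣ ((p^n : ℕ) : ℤ) := by push_cast; exact pow_dvd_pow _ ht
    have h2 : (p:ℤ)^t ∣ a - (p:ℤ)^t * (e.val : ℤ) := h1.trans h0
    have h3 := dvd_add h2 (Dvd.intro (e.val : ℤ) rfl)
    simpa using h3
  · rintro ⟨e, he⟩
    exact ⟨((e : ℤ) : ZMod (p^n)), by rw [he]; push_cast; ring⟩


/-- `eta a q` counts pairs `(α, β)` of residues mod `q` with `α² + β² ≡ a (mod q)`. -/
noncomputable def eta (a : ℤ) (q : ℕ) : ℕ :=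
  Nat.card {p : ZMod q × ZMod q // p.1 ^ 2 + p.2 ^ 2 = (a : ZMod q)}

theorem stmt19 (a : ℤ) (ha : a ≠ 0) (p : ℕ) (hp : p.Prime) (hp1 : p % 4 = 1)
    (k : ℕ) (hk : k = a.natAbs.factorization p) (hkpos : 0 < k) :
    (∀ j : ℕ, 1 ≤ j → j ≤ k →
      (eta a (p ^ j) : ℝ) = (p : ℝ) ^ j * (1 + (j : ℝ) * (1 - 1 / p))) ∧
    (∀ j : ℕ, k + 1 ≤ j →
      (eta a (p ^ j) : ℝ) = (p : ℝ) ^ j * (1 + (k : ℝ)) * (1 - 1 / p)) := by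
  have hna : a.natAbs ≠ 0 := Int.natAbs_ne_zero.2 ha
  have hmain : ∀ j : ℕ, eta a (p ^ j)
      = Nat.card {x : ZMod (p^j) × ZMod (p^j) // x.1 * x.2 = ((a : ZMod (p^j)))} := by
    intro j
    exact card_sq_eq_card_mul p hp hp1 j
      (exists_sqrt_neg_one p hp hp1 j (exists_int_sq p hp hp1 j)) _
  have hdvd : ∀ j : ℕ, ∀ t, t ≤ j →
      ((p : ZMod (p^j))^t ∣ ((a : ZMod (p^j))) ↔ t ≤ min k j) := by
    intro j t ht
    haveI : NeZero (p^j) := ⟨pow_ne_zero _ hp.pos.ne'⟩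
    rw [dvd_cast_iff a hp ht]
    have h1 : (p:ℤ)^t ∣ a ↔ p^t ∣ a.natAbs := by
      rw [show ((p:ℤ)^t) = ((p^t : ℕ) : ℤ) by push_cast; ring, Int.natCast_dvd]
    rw [h1, Nat.Prime.pow_dvd_iff_le_factorization hp hna, ← hk]
    omega
  have hp0 : (p:ℝ) ≠ 0 := Nat.cast_ne_zero.2 hp.pos.ne'
  constructor
  · intro j hj1 hjk
    haveI : NeZero (p^j) := ⟨pow_ne_zero _ hp.pos.ne'⟩
    have hc := pvalaux.count_case1 (n := j) hp ((a : ZMod (p^j)))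
      (fun t ht => by rw [hdvd j t ht]; omega)
    rw [hmain j, hc]
    have hple : p^(j-1) ≤ p^j := Nat.pow_le_pow_right hp.pos (by omega)
    rw [Nat.cast_add, Nat.cast_mul, Nat.cast_sub hple]
    push_cast
    have hpj : (p:ℝ)^(j-1) * p = (p:ℝ)^j := by
      rw [← pow_succ, show j-1+1 = j by omega]
    field_simp
    linear_combination (-(j:ℝ)) * hpj
  · intro j hjk
    haveI : NeZero (p^j) := ⟨pow_ne_zero _ hp.pos.ne'⟩
    have hc := pvalaux.count_case2 (n := j) hp ((a : ZMod (p^j))) k (by omega)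
      (fun t ht => by rw [hdvd j t ht]; omega)
    rw [hmain j, hc]
    have hple : p^(j-1) ≤ p^j := Nat.pow_le_pow_right hp.pos (by omega)
    rw [Nat.cast_mul, Nat.cast_sub hple]
    push_cast
    have hpj : (p:ℝ)^(j-1) * p = (p:ℝ)^j := by
      rw [← pow_succ, show j-1+1 = j by omega]
    field_simp
    linear_combination (-((k:ℝ)+1)) * hpj
end
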